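/- arXiv:1704.02018 — 11 statements merged into one kernel-verified Lean document; each statement's English description precedes it below -/
import Mathlib

section
/- For any finite simple graph G, the conflict-free chromatic number with respect to closed neighborhoods is at most twice the conflict-free chromatic number with respect to pointed neighborhoods: χ_CF^cn(G) ≤ 2·χ_CF^pn(G). -/
/-- A coloring `c` of the vertices of a graph `G` is a *pointed CF-coloring* if for every
vertex `v` with nonempty (pointed) neighborhood, some neighbor of `v` has a color different
from the colors of all other vertices in the neighborhood of `v`. -/
def PointedCF {V : Type*} (G : SimpleGraph V) {α : Type*} (c : V → α) : Prop :=
  ∀ v : V, (G.neighborSet v).Nonempty →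
    ∃ u ∈ G.neighborSet v, ∀ w ∈ G.neighborSet v, w ≠ u → c w ≠ c u

/-- A coloring `c` is a *closed CF-coloring* if for every vertex `v`, the closed neighborhood
`N[v] = {v} ∪ N(v)` contains a vertex whose color differs from all other vertices of `N[v]`. -/
def ClosedCF {V : Type*} (G : SimpleGraph V) {α : Type*} (c : V → α) : Prop :=
  ∀ v : V, ∃ u ∈ insert v (G.neighborSet v),
    ∀ w ∈ insert v (G.neighborSet v), w ≠ u → c w ≠ c u

/-!
Fix a pointed CF-coloring `c` and, for every non-isolated `v`, a neighbor `u v` whose color is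
unique in `N(v)`. Then `u v` is also uniquely colored in `N[v]` unless `v` is in conflict with it,
i.e. `c v = c (u v)`; in that case `v` itself becomes uniquely colored in `N[v]` as soon as a
second bit separates `v` from `u v`. Such a bit exists because conflicts are nearly acyclic: if
both `v` and `u v` are in conflict, then `u (u v) = v`, since otherwise `v` and `u (u v)` would be
two vertices of `N(u v)` of the same color. Pairing the bit with `c` gives `2k` colors.
-/

theorem ClosedCF.comp_injective {V α β : Type*} {G : SimpleGraph V} {c : V → α} {f : α → β}
    (hc : ClosedCF G c) (hf : Function.Injective f) : ClosedCF G (f ∘ c) := fun v => by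
  obtain ⟨u, hu, huniq⟩ := hc v
  exact ⟨u, hu, fun w hw hwu => hf.ne (huniq w hw hwu)⟩

theorem closedCF_prod_of_uniqueNeighbor {V α β : Type*} {G : SimpleGraph V} {c : V → α}
    {b : V → β} {u : V → V}
    (hadj : ∀ v, (G.neighborSet v).Nonempty → u v ∈ G.neighborSet v)
    (huniq : ∀ v, (G.neighborSet v).Nonempty →
      ∀ w ∈ G.neighborSet v, w ≠ u v → c w ≠ c (u v))
    (hb : ∀ v, (G.neighborSet v).Nonempty → c v = c (u v) → b v ≠ b (u v)) :
    ClosedCF G fun v => (b v, c v) := by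
  intro v
  by_cases hv : (G.neighborSet v).Nonempty
  · by_cases hconf : c v = c (u v)
    · refine ⟨v, Set.mem_insert _ _, fun w hw hwv => ?_⟩
      have hwN : w ∈ G.neighborSet v := hw.resolve_left hwv
      by_cases hwu : w = u v
      · subst hwu
        exact fun h => hb v hv hconf (congrArg Prod.fst h).symm
      · exact fun h => huniq v hv w hwN hwu ((congrArg Prod.snd h).trans hconf)
    · refine ⟨u v, Set.mem_insert_of_mem _ (hadj v hv), fun w hw hwu h => ?_⟩
      rcases hw with hwv | hwN
      · exact hconf (hwv ▸ congrArg Prod.snd h)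
      · exact huniq v hv w hwN hwu (congrArg Prod.snd h)
  · exact ⟨v, Set.mem_insert _ _, fun w hw hwv => absurd ⟨w, hw.resolve_left hwv⟩ hv⟩

theorem exists_bool_ne_apply_of_apply_apply_eq {V : Type*} {s : Set V} {f : V → V}
    (hf : ∀ v ∈ s, f v ≠ v) (hinv : ∀ v ∈ s, f v ∈ s → f (f v) = v) :
    ∃ b : V → Bool, ∀ v ∈ s, b v ≠ b (f v) := by
  classical
  let _ := IsWellOrder.linearOrder (WellOrderingRel : V → V → Prop)
  -- Inside a 2-cycle of `f` the order picks the vertex getting `true`.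
  refine ⟨fun v => decide (v ∈ s ∧ (f v ∈ s → v < f v)), fun v hv => ?_⟩
  by_cases hfv : f v ∈ s
  · simp only [hv, hfv, hinv v hv hfv, true_and, forall_const, ne_eq, decide_eq_decide]
    rcases (hf v hv).lt_or_gt with hlt | hlt <;> simp [hlt, hlt.not_gt]
  · simp [hv, hfv]

/-- If `G` admits a pointed CF-coloring with `k` colors, then it admits a closed CF-coloring
with `2k` colors; i.e. `χ_CF^cn(G) ≤ 2·χ_CF^pn(G)`. -/
theorem closedCF_le_two_mul_pointedCF {V : Type*} (G : SimpleGraph V) (k : ℕ)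
    (h : ∃ c : V → Fin k, PointedCF G c) :
    ∃ c : V → Fin (2 * k), ClosedCF G c := by
  obtain ⟨c, hc⟩ := h
  choose! u hadj huniq using hc
  have hu_ne : ∀ v, (G.neighborSet v).Nonempty → u v ≠ v := fun v hv =>
    (G.ne_of_adj (hadj v hv)).symm
  have hconflict_inv : ∀ v, (G.neighborSet v).Nonempty ∧ c v = c (u v) →
      (G.neighborSet (u v)).Nonempty ∧ c (u v) = c (u (u v)) → u (u v) = v :=
    fun v ⟨hv, hcv⟩ ⟨huv, hcuv⟩ => by_contra fun hne =>
      huniq (u v) huv v (G.adj_symm (hadj v hv)) (Ne.symm hne) (hcv.trans hcuv)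
  obtain ⟨b, hb⟩ := exists_bool_ne_apply_of_apply_apply_eq
    (s := {v | (G.neighborSet v).Nonempty ∧ c v = c (u v)}) (fun v hv => hu_ne v hv.1)
    hconflict_inv
  have hcard : Fintype.card (Bool × Fin k) = 2 * k := by simp
  exact ⟨Fintype.equivFinOfCardEq hcard ∘ fun v => (b v, c v),
    (closedCF_prod_of_uniqueNeighbor hadj huniq fun v hv hcv => hb v ⟨hv, hcv⟩).comp_injective
      (Fintype.equivFinOfCardEq hcard).injective⟩
end

section
/- Let G be the 1-subdivision of the complete graph K_i (replace every edge (v,w) by a path v–u–w through a new vertex u). Then every pointed CF-coloring of G requires at least i colors, while G admits a closed CF-coloring with 2 colors. -/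
/-- The 1-subdivision of the complete graph `K_i`: the vertices are the `i` original
vertices (`Sum.inl`) together with one subdivision vertex for each pair `v < w`
(`Sum.inr`); each subdivision vertex is adjacent exactly to the two endpoints of its pair. -/
def subdivKVertex (i : ℕ) : Type := Fin i ⊕ {p : Fin i × Fin i // p.1 < p.2}

def subdivK (i : ℕ) : SimpleGraph (subdivKVertex i) where
  Adj x y :=
    (∃ (v : Fin i) (u : {p : Fin i × Fin i // p.1 < p.2}),
      x = Sum.inl v ∧ y = Sum.inr u ∧ (v = u.1.1 ∨ v = u.1.2)) ∨
    (∃ (v : Fin i) (u : {p : Fin i × Fin i // p.1 < p.2}),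
      y = Sum.inl v ∧ x = Sum.inr u ∧ (v = u.1.1 ∨ v = u.1.2))
  symm := ⟨fun x y h => Or.symm h⟩
  loopless := ⟨by
    rintro x (⟨v, u, h1, h2, -⟩ | ⟨v, u, h1, h2, -⟩) <;> subst h1 <;> simp at h2⟩

/-! A subdivision vertex sees exactly the two endpoints of its pair, so in a pointed CF-coloring
those endpoints get different colors: the original vertices are coloured injectively, which needs
`i` colors. For closed neighbourhoods every proper coloring is conflict-free, each vertex being
the uniquely colored member of its own closed neighbourhood, and the subdivision is bipartite. -/

section ConflictFree

variable {V α : Type*} {G : SimpleGraph V} {c : V → α}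

theorem PointedCF.ne_of_neighborSet_eq_pair (hc : PointedCF G c) {u a b : V} (hab : a ≠ b)
    (hN : G.neighborSet u = {a, b}) : c a ≠ c b := by
  obtain ⟨x, hx, hunique⟩ := hc u (by simp [hN])
  rw [hN] at hx hunique
  rcases hx with rfl | rfl
  · exact fun h => hunique b (by simp) hab.symm h.symm
  · exact hunique a (by simp) hab

theorem SimpleGraph.Coloring.closedCF (C : G.Coloring α) : ClosedCF G C := by
  refine fun v => ⟨v, Set.mem_insert v _, ?_⟩
  rintro w (rfl | hw) hne
  · exact absurd rfl hne
  · exact C.valid hw.symm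

end ConflictFree

section Subdivision

variable {i : ℕ}

theorem subdivK_adj_inr {u : {p : Fin i × Fin i // p.1 < p.2}} {x : subdivKVertex i} :
    (subdivK i).Adj (Sum.inr u) x ↔ x = Sum.inl u.1.1 ∨ x = Sum.inl u.1.2 := by
  constructor
  · rintro (⟨v, u', h, -, -⟩ | ⟨v, u', rfl, h, hv⟩)
    · cases h
    · cases h
      rcases hv with rfl | rfl
      exacts [Or.inl rfl, Or.inr rfl]
  · rintro (rfl | rfl)
    exacts [Or.inr ⟨_, u, rfl, rfl, Or.inl rfl⟩, Or.inr ⟨_, u, rfl, rfl, Or.inr rfl⟩]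

theorem subdivK_neighborSet_inr (u : {p : Fin i × Fin i // p.1 < p.2}) :
    (subdivK i).neighborSet (Sum.inr u) = {Sum.inl u.1.1, Sum.inl u.1.2} :=
  Set.ext fun _ => subdivK_adj_inr

def subdivKColoring (i : ℕ) : (subdivK i).Coloring (Fin 2) :=
  SimpleGraph.Coloring.mk (Sum.elim (fun _ => 0) (fun _ => 1)) <| by
    rintro _ _ (⟨v, u, rfl, rfl, -⟩ | ⟨v, u, rfl, rfl, -⟩) <;> simp

theorem PointedCF.injective_subdivK_inl {α : Type*} {c : subdivKVertex i → α}
    (hc : PointedCF (subdivK i) c) : Function.Injective (c ∘ Sum.inl) :=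
  Function.Injective.of_lt_imp_ne fun v w hvw =>
    hc.ne_of_neighborSet_eq_pair (Sum.inl_injective.ne hvw.ne)
      (subdivK_neighborSet_inr ⟨(v, w), hvw⟩)

end Subdivision

/-- Every pointed CF-coloring of the 1-subdivision of `K_i` requires at least `i` colors,
while the graph admits a closed CF-coloring with 2 colors. -/
theorem subdivK_pointed_vs_closed (i : ℕ) :
    (∀ (k : ℕ) (c : subdivKVertex i → Fin k), PointedCF (subdivK i) c → i ≤ k) ∧
    (∃ c : subdivKVertex i → Fin 2, ClosedCF (subdivK i) c) :=
  ⟨fun _ _ hc => Fin.le_of_injective _ hc.injective_subdivK_inl,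
    ⟨subdivKColoring i, (subdivKColoring i).closedCF⟩⟩
end

section
/- Any hypergraph H with fewer than m·(m−1)/2 hyperedges admits a conflict-free coloring with fewer than m colors. -/
/-!
Induction on the number `k` of colours, counting only hyperedges of size at least two. Given
fewer than `(k+1)(k+2)/2` such hyperedges, choose a set `T` meeting all of them and colour every
vertex outside `T` with a fresh colour. A hyperedge `e` with `e ∩ T` or `e \ T` a singleton is
then already conflict-free; the others are handled by a `k`-colouring of their traces `e ∩ T`,
which still have size at least two. It remains to find `T` isolating a vertex in at least
`t := #E + 1 - k(k+1)/2 ≤ k + 1` hyperedges. If some vertex `v` has degree at least `t`, take `T`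
to be everything but `v`. Otherwise take an inclusion-minimal hitting set `T`: every vertex of
`T` has a private hyperedge meeting `T` only in it, and double counting the incidences between
`T` and `E`, each vertex lying in fewer than `t` hyperedges, shows that at least `t` hyperedges
meet `T` in a single vertex.
-/

open Finset

section

variable {V C D : Type*}

def IsCFColoring (E : Finset (Finset V)) (ψ : V → C) : Prop :=
  ∀ e ∈ E, e.Nonempty → ∃ x ∈ e, ∀ y ∈ e, y ≠ x → ψ y ≠ ψ x

theorem IsCFColoring.comp_injective {E : Finset (Finset V)} {ψ : V → C}
    (hψ : IsCFColoring E ψ) {f : C → D} (hf : f.Injective) : IsCFColoring E (f ∘ ψ) := by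
  intro e he hne
  obtain ⟨x, hx, huniq⟩ := hψ e he hne
  exact ⟨x, hx, fun y hy hyx => hf.ne (huniq y hy hyx)⟩

theorem IsCFColoring.of_filter_two_le_card {E : Finset (Finset V)} {ψ : V → C}
    (hψ : IsCFColoring {e ∈ E | 2 ≤ #e} ψ) : IsCFColoring E ψ := by
  intro e he hne
  by_cases h2 : 2 ≤ #e
  · exact hψ e (mem_filter.2 ⟨he, h2⟩) hne
  · obtain ⟨x, rfl⟩ : ∃ x, e = {x} := card_eq_one.mp (by have := hne.card_pos; omega)
    exact ⟨x, mem_singleton_self x, fun y hy hyx => absurd (mem_singleton.mp hy) hyx⟩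

variable [DecidableEq V]

def IsHittingSet (E : Finset (Finset V)) (T : Finset V) : Prop :=
  ∀ e ∈ E, (e ∩ T).Nonempty

theorem exists_minimal_isHittingSet {E : Finset (Finset V)} (hE : ∀ e ∈ E, e.Nonempty) :
    ∃ T, IsHittingSet E T ∧ ∀ v ∈ T, ¬ IsHittingSet E (T.erase v) := by
  have hsub : ∀ e ∈ E, e ⊆ E.biUnion id := fun e he => subset_biUnion_of_mem id he
  have hU : IsHittingSet E (E.biUnion id) := fun e he => by
    rw [inter_eq_left.mpr (hsub e he)]
    exact hE e he
  obtain ⟨T, hT, hmin⟩ := wellFounded_lt.has_min {T | IsHittingSet E T} ⟨_, hU⟩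
  exact ⟨T, hT, fun v hv hvT => hmin _ hvT (erase_ssubset hv)⟩

theorem IsHittingSet.exists_inter_eq_singleton {E : Finset (Finset V)} {T : Finset V} {v : V}
    (hT : IsHittingSet E T) (hv : ¬ IsHittingSet E (T.erase v)) : ∃ e ∈ E, e ∩ T = {v} := by
  simp only [IsHittingSet, not_forall, inter_erase, exists_prop] at hv
  obtain ⟨e, he, hne⟩ := hv
  rw [not_nonempty_iff_eq_empty, erase_eq_empty_iff] at hne
  exact ⟨e, he, hne.resolve_left (hT e he).ne_empty⟩

theorem card_le_card_filter_card_inter_eq_one {E : Finset (Finset V)} {T : Finset V}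
    (hpriv : ∀ v ∈ T, ∃ e ∈ E, e ∩ T = {v}) : #T ≤ #{e ∈ E | #(e ∩ T) = 1} := by
  set K := {e ∈ E | #(e ∩ T) = 1}
  have hcover : T ⊆ K.biUnion (· ∩ T) := fun v hv => by
    obtain ⟨e, he, heq⟩ := hpriv v hv
    exact mem_biUnion.2 ⟨e, mem_filter.2 ⟨he, by simp [heq]⟩, by simp [heq]⟩
  calc #T ≤ #(K.biUnion (· ∩ T)) := card_le_card hcover
    _ ≤ ∑ e ∈ K, #(e ∩ T) := card_biUnion_le
    _ = #K := by rw [sum_congr rfl fun e he => (mem_filter.mp he).2, card_eq_sum_ones]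

theorem IsHittingSet.two_mul_card_le {E : Finset (Finset V)} {T : Finset V}
    (hT : IsHittingSet E T) : 2 * #E ≤ ∑ e ∈ E, #(e ∩ T) + #{e ∈ E | #(e ∩ T) = 1} := by
  rw [card_filter, ← sum_add_distrib, mul_comm, ← smul_eq_mul, ← sum_const]
  refine sum_le_sum fun e he => ?_
  have := (hT e he).card_pos
  split_ifs <;> omega

def IsolatesVertex (T e : Finset V) : Prop :=
  #(e ∩ T) = 1 ∨ #(e \ T) = 1

instance (T : Finset V) : DecidablePred (IsolatesVertex T) := fun _ => instDecidableOr

theorem IsolatesVertex.exists_mem_iff_notMem {T e : Finset V} (h : IsolatesVertex T e) :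
    ∃ x ∈ e, ∀ y ∈ e, y ≠ x → (y ∈ T ↔ x ∉ T) := by
  rcases h with h | h <;> obtain ⟨x, hx⟩ := card_eq_one.mp h
  · have hxeT : x ∈ e ∧ x ∈ T := mem_inter.mp (hx ▸ mem_singleton_self x)
    refine ⟨x, hxeT.1, fun y hy hyx => ?_⟩
    have hyT : y ∉ T := fun hyT => hyx (mem_singleton.mp (hx ▸ mem_inter.2 ⟨hy, hyT⟩))
    simp [hyT, hxeT.2]
  · have hxeT : x ∈ e ∧ x ∉ T := mem_sdiff.mp (hx ▸ mem_singleton_self x)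
    refine ⟨x, hxeT.1, fun y hy hyx => ?_⟩
    have hyT : y ∈ T :=
      by_contra fun hyT => hyx (mem_singleton.mp (hx ▸ mem_sdiff.2 ⟨hy, hyT⟩))
    simp [hyT, hxeT.2]

theorem exists_isHittingSet_of_le_degree {E : Finset (Finset V)} (hE : ∀ e ∈ E, 2 ≤ #e)
    {v : V} {t : ℕ} (hv : t ≤ #{e ∈ E | v ∈ e}) :
    ∃ T, IsHittingSet E T ∧ t ≤ #{e ∈ E | IsolatesVertex T e} := by
  have hsub : ∀ e ∈ E, e ⊆ E.biUnion id := fun e he => subset_biUnion_of_mem id he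
  refine ⟨(E.biUnion id).erase v, fun e he => ?_, hv.trans (card_le_card ?_)⟩
  · obtain ⟨x, hx, hxv⟩ := exists_mem_ne (hE e he) v
    exact ⟨x, mem_inter.2 ⟨hx, mem_erase.2 ⟨hxv, hsub e he hx⟩⟩⟩
  · refine monotone_filter_right _ fun e he hve => Or.inr ?_
    rw [sdiff_erase hve, sdiff_eq_empty_iff_subset.mpr (hsub e he)]
    rfl

theorem exists_isHittingSet_of_degree_lt {E : Finset (Finset V)} (hE : ∀ e ∈ E, e.Nonempty)
    {t : ℕ} (hdeg : ∀ v, #{e ∈ E | v ∈ e} < t) (ht : t ≤ #E)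
    (htE : t * t + t ≤ 2 * #E + 2) :
    ∃ T, IsHittingSet E T ∧ t ≤ #{e ∈ E | IsolatesVertex T e} := by
  obtain ⟨T, hT, hmin⟩ := exists_minimal_isHittingSet hE
  refine ⟨T, hT, le_trans ?_ (card_le_card (monotone_filter_right _ fun _ _ => Or.inl))⟩
  have hTK := card_le_card_filter_card_inter_eq_one fun v hv =>
    hT.exists_inter_eq_singleton (hmin v hv)
  obtain _ | s := t
  · exact Nat.zero_le _
  have hdegT : ∀ v ∈ T, #{e ∈ E | v ∈ e} ≤ s := fun v _ => Nat.lt_succ_iff.mp (hdeg v)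
  have hsum : ∑ e ∈ E, #(e ∩ T) ≤ #T * s := by
    simpa only [inter_comm] using sum_card_inter_le hdegT
  have hcount := hT.two_mul_card_le
  by_cases hTt : s + 1 ≤ #T
  · exact hTt.trans hTK
  obtain ⟨e, he⟩ : E.Nonempty := card_pos.mp (by omega)
  have hT1 : 1 ≤ #T := card_pos.mpr ((hT e he).mono inter_subset_right)
  have : #T * s ≤ s * s := Nat.mul_le_mul_right s (by omega)
  nlinarith

theorem exists_isHittingSet_le_card_filter_isolatesVertex {E : Finset (Finset V)}
    (hE : ∀ e ∈ E, 2 ≤ #e) {t : ℕ} (ht : t ≤ #E) (htE : t * t + t ≤ 2 * #E + 2) :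
    ∃ T, IsHittingSet E T ∧ t ≤ #{e ∈ E | IsolatesVertex T e} := by
  by_cases hdeg : ∃ v, t ≤ #{e ∈ E | v ∈ e}
  · obtain ⟨v, hv⟩ := hdeg
    exact exists_isHittingSet_of_le_degree hE hv
  · push Not at hdeg
    exact exists_isHittingSet_of_degree_lt
      (fun e he => card_pos.mp (by have := hE e he; omega)) hdeg ht htE

def residualTrace (E : Finset (Finset V)) (T : Finset V) : Finset (Finset V) :=
  {e ∈ E | ¬ IsolatesVertex T e}.image (· ∩ T)

theorem card_residualTrace_add_card_filter_isolatesVertex_le (E : Finset (Finset V))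
    (T : Finset V) : #(residualTrace E T) + #{e ∈ E | IsolatesVertex T e} ≤ #E := by
  have := card_filter_add_card_filter_not (s := E) (p := fun e => IsolatesVertex T e)
  have : #(residualTrace E T) ≤ #{e ∈ E | ¬ IsolatesVertex T e} := card_image_le
  omega

theorem two_le_card_of_mem_residualTrace {E : Finset (Finset V)} {T : Finset V}
    (hT : IsHittingSet E T) : ∀ e ∈ residualTrace E T, 2 ≤ #e := by
  simp only [residualTrace, mem_image, mem_filter, IsolatesVertex, not_or]
  rintro _ ⟨e, ⟨he, hne, -⟩, rfl⟩
  have := (hT e he).card_pos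
  omega

theorem IsCFColoring.of_residualTrace {E : Finset (Finset V)} {T : Finset V} {ψ : V → C}
    (hT : IsHittingSet E T) (hψ : IsCFColoring (residualTrace E T) ψ) :
    IsCFColoring E (fun v => if v ∈ T then some (ψ v) else none) := by
  intro e he _
  by_cases hiso : IsolatesVertex T e
  · obtain ⟨x, hx, hside⟩ := hiso.exists_mem_iff_notMem
    refine ⟨x, hx, fun y hy hyx => ?_⟩
    by_cases hxT : x ∈ T <;> simp [hxT, hside y hy hyx]
  · obtain ⟨x, hx, huniq⟩ :=
      hψ (e ∩ T) (mem_image_of_mem _ (mem_filter.2 ⟨he, hiso⟩)) (hT e he)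
    obtain ⟨hxe, hxT⟩ := mem_inter.mp hx
    refine ⟨x, hxe, fun y hy hyx => ?_⟩
    by_cases hyT : y ∈ T
    · simpa [hxT, hyT] using huniq y (mem_inter.2 ⟨hy, hyT⟩) hyx
    · simp [hxT, hyT]

theorem exists_isCFColoring_fin_of_two_le_card (k : ℕ) {E : Finset (Finset V)}
    (hE2 : ∀ e ∈ E, 2 ≤ #e) (hE : 2 * #E < k * (k + 1)) :
    ∃ ψ : V → Fin k, IsCFColoring E ψ := by
  induction k generalizing E with
  | zero => omega
  | succ k ih =>
    rcases E.eq_empty_or_nonempty with rfl | hne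
    · exact ⟨fun _ => 0, by simp [IsCFColoring]⟩
    obtain ⟨q, hq⟩ := Nat.even_mul_succ_self k
    have hexpand : (k + 1) * (k + 1 + 1) = k * (k + 1) + 2 * (k + 1) := by ring
    have hk : k ≤ k * (k + 1) := Nat.le_mul_of_pos_right k k.succ_pos
    have hE1 := hne.card_pos
    set t := #E + 1 - q
    have ht : t ≤ #E := by omega
    have htE : t * t + t ≤ 2 * #E + 2 := by
      rcases (by omega : t = 0 ∨ t + q = #E + 1) with h0 | hsum
      · simp [h0]
      · have htk : t ≤ k + 1 := by omega
        nlinarith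
    obtain ⟨T, hT, hiso⟩ := exists_isHittingSet_le_card_filter_isolatesVertex hE2 ht htE
    have hres := card_residualTrace_add_card_filter_isolatesVertex_le E T
    obtain ⟨ψ, hψ⟩ := ih (two_le_card_of_mem_residualTrace hT) (by omega)
    exact ⟨_, (hψ.of_residualTrace hT).comp_injective (finSuccEquiv k).symm.injective⟩

end

/-- Any hypergraph with fewer than `m·(m−1)/2` hyperedges admits a conflict-free coloring
with fewer than `m` colors: there is `k < m` and a coloring `ψ : V → Fin k` such that every
nonempty hyperedge contains a vertex whose color is unique in that hyperedge. -/
theorem cf_coloring_of_few_hyperedges {V : Type*} [DecidableEq V]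
    (E : Finset (Finset V)) (m : ℕ) (h : E.card < m * (m - 1) / 2) :
    ∃ k < m, ∃ ψ : V → Fin k,
      ∀ e ∈ E, e.Nonempty → ∃ x ∈ e, ∀ y ∈ e, y ≠ x → ψ y ≠ ψ x := by
  obtain _ | k := m
  · simp at h
  have hE : 2 * #{e ∈ E | 2 ≤ #e} < k * (k + 1) := by
    have := card_filter_le E (2 ≤ #·)
    rw [Nat.add_sub_cancel, mul_comm] at h
    omega
  obtain ⟨ψ, hψ⟩ :=
    exists_isCFColoring_fin_of_two_le_card k (fun e he => (mem_filter.mp he).2) hE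
  exact ⟨k, k.lt_succ_self, ψ, hψ.of_filter_two_le_card⟩
end

section
/- Let H be a hypergraph on n vertices such that every induced sub-hypergraph of H admits a proper (non-monochromatic) coloring with at most k colors, where k ≥ 2 is a constant. Then H admits a conflict-free coloring with at most 1 + log_{1+1/(k−1)} n = O(log n) colors. -/
/-!
Peel off the vertices of a largest colour class of a proper colouring of what is left, and colour
every vertex by the round in which it is peeled, later rounds getting smaller colours. Each round
removes at least a `1/k` fraction of the remaining vertices, so there are at most
`1 + log_{k/(k-1)} n` rounds. In a hyperedge `e`, let `W` be the vertices left just before the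
last round that meets `e`: then `e ∩ W` lies in one colour class of a proper colouring of `H(W)`,
so it is a single vertex, and that vertex carries the unique smallest colour on `e`.
-/

open Finset

namespace Hypergraph

theorem exists_card_le_mul_card_colorClass {V : Type*} {k : ℕ} [NeZero k] (W : Finset V)
    (c : V → Fin k) :
    ∃ i, (#W : ℝ) ≤ k * #{v ∈ W | c v = i} := by
  obtain ⟨i, -, hi⟩ := exists_le_card_fiber_of_nsmul_le_card_of_maps_to
    (s := W) (fun v _ => mem_univ (c v)) univ_nonempty (b := (#W : ℝ) / k)
    (by simp [mul_div_cancel₀, NeZero.ne k])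
  exact ⟨i, by rwa [div_le_iff₀' (by simp [Nat.pos_of_neZero])] at hi⟩

variable {V : Type*} [DecidableEq V]

def IsConflictFreeOn {α : Type*} (E : Finset (Finset V)) (W : Finset V) (ψ : V → α) : Prop :=
  ∀ e ∈ E, (e ∩ W).Nonempty → ∃ x ∈ e ∩ W, ∀ y ∈ e ∩ W, y ≠ x → ψ y ≠ ψ x

def IsIndepOn (E : Finset (Finset V)) (W A : Finset V) : Prop :=
  ∀ e ∈ E, e ∩ W ⊆ A → #(e ∩ W) ≤ 1

theorem isIndepOn_colorClass {E : Finset (Finset V)} {W : Finset V} {ι : Type*} [DecidableEq ι]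
    (c : V → ι) (hc : ∀ e ∈ E, 2 ≤ #(e ∩ W) → ∃ x ∈ e ∩ W, ∃ y ∈ e ∩ W, c x ≠ c y) (i : ι) :
    IsIndepOn E W {v ∈ W | c v = i} := by
  intro e he hsub
  by_contra! h2
  obtain ⟨x, hx, y, hy, hxy⟩ := hc e he h2
  exact hxy ((mem_filter.mp (hsub hx)).2.trans (mem_filter.mp (hsub hy)).2.symm)

theorem exists_isIndepOn_card_sdiff_le {E : Finset (Finset V)} {W : Finset V} (hW : W.Nonempty)
    {k : ℕ} (hk : 2 ≤ k) (c : V → Fin k)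
    (hc : ∀ e ∈ E, 2 ≤ #(e ∩ W) → ∃ x ∈ e ∩ W, ∃ y ∈ e ∩ W, c x ≠ c y) :
    ∃ A ⊆ W, A.Nonempty ∧ IsIndepOn E W A ∧ (1 + 1 / ((k : ℝ) - 1)) * #(W \ A) ≤ #W := by
  have : NeZero k := ⟨by omega⟩
  obtain ⟨i, hi⟩ := exists_card_le_mul_card_colorClass W c
  set A := {v ∈ W | c v = i}
  have hk' : (1 : ℝ) < k := by exact_mod_cast hk
  have hW' : (0 : ℝ) < #W := by exact_mod_cast hW.card_pos
  have hA : (0 : ℝ) < #A := by nlinarith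
  have hsplit : (#(W \ A) : ℝ) + #A = #W := by
    exact_mod_cast card_sdiff_add_card_eq_card (filter_subset _ W)
  refine ⟨A, filter_subset _ W, card_pos.mp (by exact_mod_cast hA), isIndepOn_colorClass c hc i,
    ?_⟩
  rw [one_add_div (by linarith), sub_add_cancel, div_mul_eq_mul_div, div_le_iff₀ (by linarith)]
  nlinarith

theorem IsConflictFreeOn.extend {E : Finset (Finset V)} {W A : Finset V} {ψ : V → ℕ} {N : ℕ}
    (hψ : IsConflictFreeOn E (W \ A) ψ) (hψN : ∀ v ∈ W \ A, ψ v < N) (hA : IsIndepOn E W A) :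
    IsConflictFreeOn E W fun v => if v ∈ A then N else ψ v := by
  intro e he hne
  by_cases hrest : (e ∩ (W \ A)).Nonempty
  · obtain ⟨x, hx, hxu⟩ := hψ e he hrest
    have hxA : x ∉ A := (mem_sdiff.mp (mem_inter.mp hx).2).2
    refine ⟨x, inter_subset_inter_left sdiff_subset hx, fun y hy hyx => ?_⟩
    simp only [hxA, if_false]
    split_ifs with hyA
    · exact (hψN x (mem_inter.mp hx).2).ne'
    · exact hxu y (by simp_all) hyx
  · have hsub : e ∩ W ⊆ A := fun v hv => by
      by_contra hvA
      exact hrest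
        ⟨v, mem_inter.mpr ⟨(mem_inter.mp hv).1, mem_sdiff.mpr ⟨(mem_inter.mp hv).2, hvA⟩⟩⟩
    obtain ⟨x, hx⟩ := card_eq_one.mp (le_antisymm (hA e he hsub) hne.card_pos)
    exact ⟨x, by simp [hx], fun y hy hyx => absurd (by simpa [hx] using hy) hyx⟩

/-- The bound `∀ M, #W < r ^ M → N ≤ M` says `r ^ (N - 1) ≤ #W` for nonempty `W`, in a form whose
induction needs no case split on whether the remainder `W \ A` is empty. -/
theorem exists_isConflictFreeOn_of_peel {E : Finset (Finset V)} {r : ℝ} (hr : 0 < r)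
    (hpeel : ∀ W : Finset V, W.Nonempty →
      ∃ A ⊆ W, A.Nonempty ∧ IsIndepOn E W A ∧ r * #(W \ A) ≤ #W)
    (W : Finset V) :
    ∃ N : ℕ, (∀ M : ℕ, (#W : ℝ) < r ^ M → N ≤ M) ∧
      ∃ ψ : V → ℕ, (∀ v ∈ W, ψ v < N) ∧ IsConflictFreeOn E W ψ := by
  induction W using strongInduction with
  | H W ih =>
  rcases W.eq_empty_or_nonempty with rfl | hW
  · exact ⟨0, fun _ _ => Nat.zero_le _, fun _ => 0, by simp, fun e _ he => by simp at he⟩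
  obtain ⟨A, hAW, hAne, hAind, hAcard⟩ := hpeel W hW
  obtain ⟨N, hNM, ψ, hψN, hψ⟩ := ih (W \ A) (sdiff_ssubset hAW hAne)
  refine ⟨N + 1, fun M hM => ?_, _, fun v hv => ?_, hψ.extend hψN hAind⟩
  · obtain ⟨M, rfl⟩ : ∃ M', M = M' + 1 := Nat.exists_eq_succ_of_ne_zero <| by
      rintro rfl
      have : (1 : ℝ) ≤ #W := by exact_mod_cast hW.card_pos
      rw [pow_zero] at hM
      linarith
    have : r * #(W \ A) < r * r ^ M := by rw [← pow_succ']; linarith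
    exact Nat.succ_le_succ (hNM M (lt_of_mul_lt_mul_left this hr.le))
  · split_ifs with hvA
    · exact Nat.lt_succ_self N
    · exact (hψN v (mem_sdiff.mpr ⟨hv, hvA⟩)).trans (Nat.lt_succ_self N)

theorem natCast_le_one_add_logb {r : ℝ} (hr : 1 < r) {n N : ℕ}
    (hN : ∀ M : ℕ, (n : ℝ) < r ^ M → N ≤ M) : (N : ℝ) ≤ 1 + Real.logb r n := by
  rcases N.eq_zero_or_pos with rfl | hpos
  · have : 0 ≤ Real.logb r n := div_nonneg (Real.log_natCast_nonneg n) (Real.log_nonneg hr.le)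
    push_cast
    linarith
  have hpow : r ^ (N - 1) ≤ n := not_lt.mp fun h => by have := hN _ h; omega
  have hlog : ((N - 1 : ℕ) : ℝ) ≤ Real.logb r n := by
    rwa [Real.le_logb_iff_rpow_le hr ((pow_pos (by linarith) _).trans_le hpow), Real.rpow_natCast]
  push_cast [Nat.one_le_iff_ne_zero.mpr hpos.ne'] at hlog
  linarith

end Hypergraph

open Hypergraph in
theorem cf_from_hereditary_proper_general {V : Type*} [Fintype V] [DecidableEq V]
    (n k : ℕ) (hn : Fintype.card V = n) (hk : 2 ≤ k)
    (E : Finset (Finset V))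
    (hprop : ∀ W : Finset V, ∃ c : V → Fin k,
      ∀ e ∈ E, 2 ≤ (e ∩ W).card → ∃ x ∈ e ∩ W, ∃ y ∈ e ∩ W, c x ≠ c y) :
    ∃ N : ℕ, (N : ℝ) ≤ 1 + Real.logb (1 + 1 / ((k : ℝ) - 1)) n ∧
      ∃ ψ : V → Fin N,
        ∀ e ∈ E, e.Nonempty → ∃ x ∈ e, ∀ y ∈ e, y ≠ x → ψ y ≠ ψ x := by
  have hr : (1 : ℝ) < 1 + 1 / ((k : ℝ) - 1) :=
    lt_add_of_pos_right _ (one_div_pos.mpr (by rw [sub_pos]; exact_mod_cast hk))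
  obtain ⟨N, hNM, ψ, hψN, hψ⟩ := exists_isConflictFreeOn_of_peel (by linarith) (fun W hW =>
    let ⟨c, hc⟩ := hprop W
    exists_isIndepOn_card_sdiff_le hW hk c hc) univ
  rw [card_univ, hn] at hNM
  refine ⟨N, natCast_le_one_add_logb hr hNM, fun v => ⟨ψ v, hψN v (mem_univ v)⟩,
    fun e he hne => ?_⟩
  obtain ⟨x, hx, hxu⟩ := hψ e he (by rwa [inter_univ])
  rw [inter_univ] at hx hxu
  exact ⟨x, hx, fun y hy hyx h => hxu y hy hyx (congrArg Fin.val h)⟩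

/-- If every induced sub-hypergraph of a hypergraph `H` on `n ≥ 1` vertices admits a proper
(non-monochromatic) coloring with at most `k ≥ 2` colors, then `H` admits a conflict-free
coloring with at most `1 + log_{1+1/(k−1)} n` colors. -/
theorem cf_from_hereditary_proper {V : Type*} [Fintype V] [DecidableEq V]
    (n k : ℕ) (hn : Fintype.card V = n) (hn1 : 1 ≤ n) (hk : 2 ≤ k)
    (E : Finset (Finset V))
    (hprop : ∀ W : Finset V, ∃ c : V → Fin k,
      ∀ e ∈ E, 2 ≤ (e ∩ W).card → ∃ x ∈ e ∩ W, ∃ y ∈ e ∩ W, c x ≠ c y) :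
    ∃ N : ℕ, (N : ℝ) ≤ 1 + Real.logb (1 + 1 / ((k : ℝ) - 1)) n ∧
      ∃ ψ : V → Fin N,
        ∀ e ∈ E, e.Nonempty → ∃ x ∈ e, ∀ y ∈ e, y ≠ x → ψ y ≠ ψ x :=
  cf_from_hereditary_proper_general n k hn hk E hprop
end

section
/- Let D₁, D₂, B₁, B₂ be closed discs in the plane with centers c₁, c₂, b₁, b₂ respectively, such that D₁ ∩ B₁ ≠ ∅, D₂ ∩ B₂ ≠ ∅, D₁ ∩ B₂ = ∅, and D₂ ∩ B₁ = ∅. Then the straight line segment [c₁, b₁] is disjoint from the straight line segment [c₂, b₂]. -/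
/-- The Euclidean plane. -/
abbrev Plane := EuclideanSpace ℝ (Fin 2)

open RealInnerProductSpace in
lemma dist_lt_dist_iff_inner (p x y : Plane) :
    dist p x < dist p y ↔ 2 * ⟪p, y - x⟫ < ‖y‖ ^ 2 - ‖x‖ ^ 2 := by
  rw [dist_eq_norm, dist_eq_norm, ← Real.sqrt_sq (norm_nonneg (p - x)),
    ← Real.sqrt_sq (norm_nonneg (p - y)), Real.sqrt_lt_sqrt_iff (by positivity)]
  have h1 : ‖p - x‖ ^ 2 = ‖p‖ ^ 2 - 2 * ⟪p, x⟫ + ‖x‖ ^ 2 := by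
    rw [← real_inner_self_eq_norm_sq, ← real_inner_self_eq_norm_sq,
      ← real_inner_self_eq_norm_sq, inner_sub_sub_self, real_inner_comm x p]; ring
  have h2 : ‖p - y‖ ^ 2 = ‖p‖ ^ 2 - 2 * ⟪p, y⟫ + ‖y‖ ^ 2 := by
    rw [← real_inner_self_eq_norm_sq, ← real_inner_self_eq_norm_sq,
      ← real_inner_self_eq_norm_sq, inner_sub_sub_self, real_inner_comm y p]; ring
  rw [h1, h2, inner_sub_right]
  constructor <;> intro h <;> nlinarith

open RealInnerProductSpace in
lemma segment_closer (u v x y p : Plane) (hu : dist u x < dist u y)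
    (hv : dist v x < dist v y) (hp : p ∈ segment ℝ u v) : dist p x < dist p y := by
  have hconv : Convex ℝ {q : Plane | 2 * ⟪q, y - x⟫ < ‖y‖ ^ 2 - ‖x‖ ^ 2} := by
    apply convex_halfSpace_lt (f := fun q : Plane => 2 * ⟪q, y - x⟫)
    constructor
    · intro a b; rw [inner_add_left]; ring
    · intro c a; rw [real_inner_smul_left, smul_eq_mul]; ring
  rw [dist_lt_dist_iff_inner] at hu hv ⊢
  exact hconv.segment_subset hu hv hp

/-- Let `D₁, D₂, B₁, B₂` be closed discs in the plane with centers `c₁, c₂, b₁, b₂`, such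
that `D₁ ∩ B₁ ≠ ∅`, `D₂ ∩ B₂ ≠ ∅`, `D₁ ∩ B₂ = ∅` and `D₂ ∩ B₁ = ∅`. Then the segment
`[c₁, b₁]` is disjoint from the segment `[c₂, b₂]`. -/
theorem segments_disjoint_of_disc_intersections
    (c₁ c₂ b₁ b₂ : Plane) (r₁ r₂ s₁ s₂ : ℝ)
    (h11 : (Metric.closedBall c₁ r₁ ∩ Metric.closedBall b₁ s₁).Nonempty)
    (h22 : (Metric.closedBall c₂ r₂ ∩ Metric.closedBall b₂ s₂).Nonempty)
    (h12 : Metric.closedBall c₁ r₁ ∩ Metric.closedBall b₂ s₂ = ∅)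
    (h21 : Metric.closedBall c₂ r₂ ∩ Metric.closedBall b₁ s₁ = ∅) :
    Disjoint (segment ℝ c₁ b₁) (segment ℝ c₂ b₂) := by
  obtain ⟨x, hx1, hx2⟩ := h11
  obtain ⟨y, hy1, hy2⟩ := h22
  -- y is not in D₁ nor in B₁; x is not in D₂ nor in B₂
  have hyD1 : y ∉ Metric.closedBall c₁ r₁ := fun h =>
    Set.eq_empty_iff_forall_notMem.mp h12 y ⟨h, hy2⟩
  have hyB1 : y ∉ Metric.closedBall b₁ s₁ := fun h =>
    Set.eq_empty_iff_forall_notMem.mp h21 y ⟨hy1, h⟩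
  have hxD2 : x ∉ Metric.closedBall c₂ r₂ := fun h =>
    Set.eq_empty_iff_forall_notMem.mp h21 x ⟨h, hx2⟩
  have hxB2 : x ∉ Metric.closedBall b₂ s₂ := fun h =>
    Set.eq_empty_iff_forall_notMem.mp h12 x ⟨hx1, h⟩
  simp only [Metric.mem_closedBall, not_le] at hx1 hx2 hy1 hy2 hyD1 hyB1 hxD2 hxB2
  have hc1 : dist c₁ x < dist c₁ y := by
    rw [dist_comm c₁ x, dist_comm c₁ y]; linarith
  have hb1 : dist b₁ x < dist b₁ y := by
    rw [dist_comm b₁ x, dist_comm b₁ y]; linarith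
  have hc2 : dist c₂ y < dist c₂ x := by
    rw [dist_comm c₂ x, dist_comm c₂ y]; linarith
  have hb2 : dist b₂ y < dist b₂ x := by
    rw [dist_comm b₂ x, dist_comm b₂ y]; linarith
  rw [Set.disjoint_left]
  intro p hp1 hp2
  have h1 := segment_closer c₁ b₁ x y p hc1 hb1 hp1
  have h2 := segment_closer c₂ b₂ y x p hc2 hb2 hp2
  linarith
end

section
/- Let F be a finite family of closed intervals on the real line and let G be the intersection graph of F. Then G admits a closed CF-coloring with at most 3 colors. -/
namespace CFIntervalAux

variable (n : ℕ) (a b : Fin n → ℝ)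

/-- The greedy selection step: among intervals whose right endpoint exceeds the frontier `x`,
consider those starting at most `max x m` (where `m` is the least left endpoint among them),
and pick one maximizing the right endpoint. -/
lemma pick_exists (x : ℝ) (hS : (Finset.univ.filter fun i => x < b i).Nonempty) :
    ∃ j : Fin n, x < b j ∧ (∀ i, x < b i → a i ≤ x → b i ≤ b j) ∧
      ∀ i, x < b i → a j ≤ max x (a i) := by
  classical
  set S := Finset.univ.filter fun i => x < b i with hSdef
  set m := S.inf' hS a with hm
  set T := S.filter (fun i => a i ≤ max x m) with hT
  have hTne : T.Nonempty := by
    obtain ⟨i, hi, hia⟩ := S.exists_mem_eq_inf' hS a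
    exact ⟨i, Finset.mem_filter.2 ⟨hi, by rw [← hm] at hia; rw [← hia]; exact le_max_right _ _⟩⟩
  obtain ⟨j, hjT, hmax⟩ := T.exists_max_image b hTne
  have hjS : j ∈ S := (Finset.mem_filter.1 hjT).1
  refine ⟨j, (Finset.mem_filter.1 hjS).2, ?_, ?_⟩
  · intro i hib hix
    have hiT : i ∈ T := Finset.mem_filter.2
      ⟨Finset.mem_filter.2 ⟨Finset.mem_univ _, hib⟩, le_trans hix (le_max_left _ _)⟩
    exact hmax i hiT
  · intro i hib
    have hiS : i ∈ S := Finset.mem_filter.2 ⟨Finset.mem_univ _, hib⟩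
    have hmi : m ≤ a i := Finset.inf'_le _ hiS
    exact le_trans (Finset.mem_filter.1 hjT).2 (max_le_max le_rfl hmi)

noncomputable def pick (x : ℝ) : Option (Fin n) :=
  if hS : (Finset.univ.filter fun i => x < b i).Nonempty then
    some (Classical.choose (pick_exists n a b x hS)) else none

lemma pick_spec {x : ℝ} {j : Fin n} (h : pick n a b x = some j) :
    x < b j ∧ (∀ i, x < b i → a i ≤ x → b i ≤ b j) ∧
      ∀ i, x < b i → a j ≤ max x (a i) := by
  unfold pick at h
  by_cases hS : (Finset.univ.filter fun i => x < b i).Nonempty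
  · rw [dif_pos hS] at h
    have hspec := Classical.choose_spec (pick_exists n a b x hS)
    rwa [Option.some.inj h] at hspec
  · rw [dif_neg hS] at h
    exact absurd h (by simp)

lemma pick_isSome {x : ℝ} {i : Fin n} (hi : x < b i) :
    ∃ j, pick n a b x = some j := by
  unfold pick
  rw [dif_pos ⟨i, Finset.mem_filter.2 ⟨Finset.mem_univ _, hi⟩⟩]
  exact ⟨_, rfl⟩

variable (x0 : ℝ)

noncomputable def front : ℕ → ℝ
  | 0 => x0
  | t+1 => (pick n a b (front t)).elim (front t) b

noncomputable abbrev node (t : ℕ) : Option (Fin n) := pick n a b (front n a b x0 t)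

lemma front_succ_some {t : ℕ} {j : Fin n} (h : node n a b x0 t = some j) :
    front n a b x0 (t+1) = b j := by
  have heq : front n a b x0 (t+1) = (node n a b x0 t).elim (front n a b x0 t) b := rfl
  rw [heq, h]
  rfl

lemma front_succ_none {t : ℕ} (h : node n a b x0 t = none) :
    front n a b x0 (t+1) = front n a b x0 t := by
  have heq : front n a b x0 (t+1) = (node n a b x0 t).elim (front n a b x0 t) b := rfl
  rw [heq, h]
  rfl

lemma front_lt_of_some {t : ℕ} {j : Fin n} (h : node n a b x0 t = some j) :
    front n a b x0 t < front n a b x0 (t+1) := by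
  rw [front_succ_some n a b x0 h]
  exact (pick_spec n a b h).1

lemma front_le_succ (t : ℕ) : front n a b x0 t ≤ front n a b x0 (t+1) := by
  cases h : node n a b x0 t with
  | none => rw [front_succ_none n a b x0 h]
  | some j => exact le_of_lt (front_lt_of_some n a b x0 h)

lemma front_mono : Monotone (front n a b x0) :=
  monotone_nat_of_le_succ (front_le_succ n a b x0)

lemma node_none_succ {t : ℕ} (h : node n a b x0 t = none) :
    node n a b x0 (t+1) = none := by
  unfold node
  rw [front_succ_none n a b x0 h]
  exact h

lemma node_none_mono {t t' : ℕ} (htt' : t ≤ t') (h : node n a b x0 t = none) :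
    node n a b x0 t' = none := by
  induction t' with
  | zero => have : t = 0 := Nat.le_zero.1 htt'; rwa [← this]
  | succ s ih =>
    rcases Nat.lt_or_ge t (s+1) with hlt | hge
    · exact node_none_succ n a b x0 (ih (Nat.lt_succ_iff.1 hlt))
    · have : t = s + 1 := le_antisymm htt' hge
      rwa [← this]

lemma b_lt_b {t t' : ℕ} {j j' : Fin n} (htt' : t < t')
    (h : node n a b x0 t = some j) (h' : node n a b x0 t' = some j') : b j < b j' := by
  have h1 : front n a b x0 (t+1) ≤ front n a b x0 t' := front_mono n a b x0 htt'
  have h2 : front n a b x0 t' < b j' := (pick_spec n a b h').1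
  rw [front_succ_some n a b x0 h] at h1
  linarith

lemma node_inj {t t' : ℕ} {j : Fin n}
    (h : node n a b x0 t = some j) (h' : node n a b x0 t' = some j) : t = t' := by
  rcases lt_trichotomy t t' with hlt | heq | hgt
  · exact absurd (b_lt_b n a b x0 hlt h h') (lt_irrefl _)
  · exact heq
  · exact absurd (b_lt_b n a b x0 hgt h' h) (lt_irrefl _)

lemma card_bound (t : ℕ) :
    (Finset.univ.filter fun i => front n a b x0 t < b i).card ≤ n - t := by
  induction t with
  | zero => exact (Finset.card_filter_le _ _).trans (by simp)
  | succ t ih =>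
    cases h : node n a b x0 t with
    | none =>
      have hempty : (Finset.univ.filter fun i => front n a b x0 (t+1) < b i) = ∅ := by
        rw [Finset.filter_eq_empty_iff]
        intro i _
        rw [front_succ_none n a b x0 h]
        have : ¬ (Finset.univ.filter fun i => front n a b x0 t < b i).Nonempty := by
          intro hne
          obtain ⟨i', hi'⟩ := hne
          obtain ⟨j, hj⟩ := pick_isSome n a b (Finset.mem_filter.1 hi').2
          have hj' : node n a b x0 t = some j := hj
          rw [h] at hj'; exact absurd hj' (by simp)
        intro hlt
        exact this ⟨i, Finset.mem_filter.2 ⟨Finset.mem_univ _, hlt⟩⟩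
      rw [hempty]; simp
    | some j =>
      have hjmem : j ∈ Finset.univ.filter fun i => front n a b x0 t < b i :=
        Finset.mem_filter.2 ⟨Finset.mem_univ _, (pick_spec n a b h).1⟩
      have hsub : (Finset.univ.filter fun i => front n a b x0 (t+1) < b i) ⊆
          (Finset.univ.filter fun i => front n a b x0 t < b i).erase j := by
        intro i hi
        have hi' : front n a b x0 (t+1) < b i := (Finset.mem_filter.1 hi).2
        refine Finset.mem_erase.2 ⟨?_, Finset.mem_filter.2 ⟨Finset.mem_univ _, ?_⟩⟩
        · intro he
          rw [he, front_succ_some n a b x0 h] at hi'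
          exact lt_irrefl _ hi'
        · exact (front_le_succ n a b x0 t).trans_lt hi'
      have hc := Finset.card_le_card hsub
      rw [Finset.card_erase_of_mem hjmem] at hc
      omega

lemma front_final (k : Fin n) : b k ≤ front n a b x0 n := by
  have hcard := card_bound n a b x0 n
  rw [Nat.sub_self] at hcard
  have hempty := Finset.card_eq_zero.1 (Nat.le_zero.1 hcard)
  by_contra hlt
  push_neg at hlt
  have : k ∈ Finset.univ.filter fun i => front n a b x0 n < b i :=
    Finset.mem_filter.2 ⟨Finset.mem_univ _, hlt⟩
  rw [hempty] at this
  exact absurd this (by simp)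

lemma covered (hx0 : ∀ i, x0 < b i) (hn : 0 < n) (k : Fin n) :
    ∃ t j, node n a b x0 t = some j ∧ front n a b x0 t < b k ∧ b k ≤ b j := by
  classical
  have hex : ∃ t, b k ≤ front n a b x0 (t+1) :=
    ⟨n - 1, by
      have he : n - 1 + 1 = n := by omega
      rw [he]; exact front_final n a b x0 k⟩
  set t := Nat.find hex with ht
  have h1 : b k ≤ front n a b x0 (t+1) := Nat.find_spec hex
  have h2 : front n a b x0 t < b k := by
    cases ht' : t with
    | zero => exact hx0 k
    | succ s =>
      have hmin := Nat.find_min hex (by omega : s < t)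
      push_neg at hmin
      exact hmin
  cases h : node n a b x0 t with
  | none =>
    rw [front_succ_none n a b x0 h] at h1
    linarith
  | some j =>
    rw [front_succ_some n a b x0 h] at h1
    exact ⟨t, j, h, h2, h1⟩

lemma front_lt_a {t : ℕ} {w : Fin n} (h : node n a b x0 (t+1) = some w) :
    front n a b x0 t < a w := by
  by_contra hle
  push_neg at hle
  obtain ⟨u, hu⟩ : ∃ u, node n a b x0 t = some u := by
    cases h' : node n a b x0 t with
    | none => rw [node_none_succ n a b x0 h'] at h; exact absurd h (by simp)
    | some u => exact ⟨u, rfl⟩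
  have h1 : front n a b x0 t < front n a b x0 (t+1) := front_lt_of_some n a b x0 hu
  have h2 : front n a b x0 (t+1) < b w := (pick_spec n a b h).1
  have h3 := (pick_spec n a b hu).2.1 w (h1.trans h2) hle
  rw [← front_succ_some n a b x0 hu] at h3
  linarith

lemma window (hab : ∀ i, a i ≤ b i) {t t' : ℕ} {j j' v : Fin n}
    (h : node n a b x0 t = some j) (h1 : a v ≤ b j) (h2 : a j ≤ b v)
    (h' : node n a b x0 t' = some j') (h1' : a v ≤ b j') (h2' : a j' ≤ b v)
    (htt' : t ≤ t') : t' ≤ t + 2 := by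
  by_contra hc
  push_neg at hc
  have hbj : front n a b x0 (t+1) = b j := front_succ_some n a b x0 h
  have hav : a v ≤ front n a b x0 (t+1) := by rw [hbj]; exact h1
  by_cases hbv : b v ≤ front n a b x0 (t+1)
  · obtain ⟨s, rfl⟩ : ∃ s, t' = s + 1 := ⟨t' - 1, by omega⟩
    have hLB := front_lt_a n a b x0 h'
    have hmon : front n a b x0 (t+1) ≤ front n a b x0 s := front_mono n a b x0 (by omega)
    linarith
  · push_neg at hbv
    obtain ⟨u, hu⟩ := pick_isSome n a b (x := front n a b x0 (t+1)) hbv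
    have hu' : node n a b x0 (t+1) = some u := hu
    have hbv2 : b v ≤ front n a b x0 (t+2) := by
      have hmx := (pick_spec n a b hu').2.1 v hbv hav
      rw [← front_succ_some n a b x0 hu'] at hmx
      exact hmx
    by_cases hja : a j' ≤ front n a b x0 (t+2)
    · obtain ⟨w, hw⟩ : ∃ w, node n a b x0 (t+2) = some w := by
        cases hw' : node n a b x0 (t+2) with
        | none =>
          rw [node_none_mono n a b x0 (by omega : t+2 ≤ t') hw'] at h'
          exact absurd h' (by simp)
        | some w => exact ⟨w, rfl⟩
      have hstrict : front n a b x0 (t+2) < front n a b x0 (t+3) :=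
        front_lt_of_some n a b x0 hw
      have hle3 : front n a b x0 (t+3) ≤ front n a b x0 t' := front_mono n a b x0 (by omega)
      have hb' : front n a b x0 t' < b j' := (pick_spec n a b h').1
      have hcand : b j' ≤ b w := (pick_spec n a b hw).2.1 j' (by linarith) hja
      have hbw : front n a b x0 (t+3) = b w := front_succ_some n a b x0 hw
      linarith
    · push_neg at hja
      linarith

lemma consec (hab : ∀ i, a i ≤ b i) {t : ℕ} {j j'' v : Fin n}
    (h : node n a b x0 t = some j) (h1 : a v ≤ b j) (h2 : a j ≤ b v)
    (h'' : node n a b x0 (t+2) = some j'') (h1'' : a v ≤ b j'') (h2'' : a j'' ≤ b v) :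
    ∃ j', node n a b x0 (t+1) = some j' ∧ a v ≤ b j' ∧ a j' ≤ b v := by
  obtain ⟨j', hj'⟩ : ∃ j', node n a b x0 (t+1) = some j' := by
    cases hw' : node n a b x0 (t+1) with
    | none =>
      rw [node_none_succ n a b x0 hw'] at h''
      exact absurd h'' (by simp)
    | some j' => exact ⟨j', rfl⟩
  have e1 : front n a b x0 (t+1) = b j := front_succ_some n a b x0 h
  have e2 : front n a b x0 (t+2) = b j' := front_succ_some n a b x0 hj'
  have lt12 : front n a b x0 (t+1) < front n a b x0 (t+2) := front_lt_of_some n a b x0 hj'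
  refine ⟨j', hj', by linarith, ?_⟩
  have hLB : front n a b x0 (t+1) < a j'' := front_lt_a n a b x0 h''
  have hbv : front n a b x0 (t+1) < b v := lt_of_lt_of_le hLB h2''
  have hcand := (pick_spec n a b hj').2.2 v hbv
  exact le_trans hcand (max_le hbv.le (hab v))

open Classical in
noncomputable def col (v : Fin n) : Fin 3 :=
  if h : ∃ t, node n a b x0 t = some v then (if Nat.find h % 2 = 0 then 1 else 2) else 0

lemma col_of_node {t : ℕ} {v : Fin n} (h : node n a b x0 t = some v) :
    col n a b x0 v = if t % 2 = 0 then 1 else 2 := by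
  have hex : ∃ t, node n a b x0 t = some v := ⟨t, h⟩
  unfold col
  rw [dif_pos hex]
  have hfind : Nat.find hex = t := node_inj n a b x0 (Nat.find_spec hex) h
  rw [hfind]

lemma col_nonchain {v : Fin n} (h : ∀ t, node n a b x0 t ≠ some v) :
    col n a b x0 v = 0 := by
  unfold col
  rw [dif_neg]
  rintro ⟨t, ht⟩
  exact h t ht

end CFIntervalAux

open CFIntervalAux

/-- The intersection graph of any finite family of closed intervals on the real line admits
a closed CF-coloring with at most 3 colors: for every vertex `v`, the closed neighborhood
`N[v]` contains a vertex whose color differs from the colors of all other vertices of `N[v]`. -/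
theorem intervals_closedCF_three_colors (n : ℕ) (a b : Fin n → ℝ)
    (hab : ∀ i, a i ≤ b i) (G : SimpleGraph (Fin n))
    (hG : ∀ i j, G.Adj i j ↔
      i ≠ j ∧ (Set.Icc (a i) (b i) ∩ Set.Icc (a j) (b j)).Nonempty) :
    ∃ c : Fin n → Fin 3, ∀ v, ∃ u ∈ insert v (G.neighborSet v),
      ∀ w ∈ insert v (G.neighborSet v), w ≠ u → c w ≠ c u := by
  classical
  rcases Nat.eq_zero_or_pos n with hn | hn
  · subst hn
    exact ⟨fun v => 0, fun v => v.elim0⟩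
  have huniv : (Finset.univ : Finset (Fin n)).Nonempty := ⟨⟨0, hn⟩, Finset.mem_univ _⟩
  set x0 : ℝ := Finset.univ.inf' huniv b - 1 with hx0def
  have hx0 : ∀ i, x0 < b i := by
    intro i
    have : Finset.univ.inf' huniv b ≤ b i := Finset.inf'_le _ (Finset.mem_univ i)
    rw [hx0def]; linarith
  -- membership in closed neighborhood ↔ intervals meet
  have hmem : ∀ v w : Fin n, w ∈ insert v (G.neighborSet v) ↔ (a v ≤ b w ∧ a w ≤ b v) := by
    intro v w
    simp only [Set.mem_insert_iff, SimpleGraph.mem_neighborSet, hG]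
    constructor
    · rintro (rfl | ⟨hne, hint⟩)
      · exact ⟨hab _, hab _⟩
      · rw [Set.Icc_inter_Icc] at hint
        have hmm := Set.nonempty_Icc.1 hint
        constructor
        · exact le_trans (le_trans (le_max_left _ _) hmm) (min_le_right _ _)
        · exact le_trans (le_trans (le_max_right _ _) hmm) (min_le_left _ _)
    · rintro ⟨h1, h2⟩
      by_cases hvw : w = v
      · exact Or.inl hvw
      · refine Or.inr ⟨fun he => hvw he.symm, ?_⟩
        rw [Set.Icc_inter_Icc]
        exact Set.nonempty_Icc.2 (max_le (le_min (hab v) h1) (le_min h2 (hab w)))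
  refine ⟨col n a b x0, ?_⟩
  intro v
  have hPex : ∃ t, ∃ j, node n a b x0 t = some j ∧ a v ≤ b j ∧ a j ≤ b v := by
    obtain ⟨t, j, hnode, hflt, hble⟩ := covered n a b x0 hx0 hn v
    refine ⟨t, j, hnode, le_trans (hab v) hble, ?_⟩
    have h3 := (pick_spec n a b hnode).2.2 v hflt
    exact le_trans h3 (max_le hflt.le (hab v))
  set p := Nat.find hPex with hp
  obtain ⟨jp, hjp, hmp1, hmp2⟩ := Nat.find_spec hPex
  by_cases hp1 : ∃ j, node n a b x0 (p+1) = some j ∧ a v ≤ b j ∧ a j ≤ b v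
  · obtain ⟨u, hu, hu1, hu2⟩ := hp1
    refine ⟨u, (hmem v u).2 ⟨hu1, hu2⟩, ?_⟩
    intro w hw hne
    obtain ⟨hw1, hw2⟩ := (hmem v w).1 hw
    by_cases hc : ∃ t, node n a b x0 t = some w
    · obtain ⟨t, ht⟩ := hc
      have hpt : p ≤ t := Nat.find_le ⟨w, ht, hw1, hw2⟩
      have htp : t ≤ p + 2 :=
        window n a b x0 hab hjp hmp1 hmp2 ht hw1 hw2 hpt
      have htne : t ≠ p + 1 := by
        intro he
        rw [he] at ht
        exact hne (Option.some.inj (ht.symm.trans hu))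
      rw [col_of_node n a b x0 ht, col_of_node n a b x0 hu]
      have hpar : t % 2 ≠ (p+1) % 2 := by omega
      by_cases ht2 : t % 2 = 0
      · rw [if_pos ht2, if_neg (by omega)]; decide
      · rw [if_neg ht2, if_pos (by omega)]; decide
    · push_neg at hc
      rw [col_nonchain n a b x0 hc, col_of_node n a b x0 hu]
      split <;> decide
  · refine ⟨jp, (hmem v jp).2 ⟨hmp1, hmp2⟩, ?_⟩
    intro w hw hne
    obtain ⟨hw1, hw2⟩ := (hmem v w).1 hw
    by_cases hc : ∃ t, node n a b x0 t = some w
    · obtain ⟨t, ht⟩ := hc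
      have hpt : p ≤ t := Nat.find_le ⟨w, ht, hw1, hw2⟩
      have htp : t ≤ p + 2 :=
        window n a b x0 hab hjp hmp1 hmp2 ht hw1 hw2 hpt
      have h0 : t ≠ p := by
        intro he
        rw [he] at ht
        exact hne (Option.some.inj (ht.symm.trans hjp))
      have h1 : t ≠ p + 1 := by
        intro he
        rw [he] at ht
        exact hp1 ⟨w, ht, hw1, hw2⟩
      have h2 : t ≠ p + 2 := by
        intro he
        rw [he] at ht
        obtain ⟨j', hj', hj1, hj2⟩ := consec n a b x0 hab hjp hmp1 hmp2 ht hw1 hw2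
        exact hp1 ⟨j', hj', hj1, hj2⟩
      omega
    · push_neg at hc
      rw [col_nonchain n a b x0 hc, col_of_node n a b x0 hjp]
      split <;> decide
end

section
/- Let F be a family of n axis-parallel closed rectangles in the plane and let G be the intersection graph of F. Then χ_CF^cn(G) = O(log n); specifically, G admits a closed CF-coloring with at most 3·⌈log₂ n⌉ + 3 colors. -/
/-!
Cut the family by a vertical line `x = m` through a median of the left edges. Rectangles lying
strictly left of the line never meet those strictly right of it, so the two sides (each at most
half of the family) are coloured recursively with one shared palette. The rectangles crossing the
line pairwise meet horizontally, so among them meeting is meeting of vertical sides, and they get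
three fresh colours from the interval case.

Intervals are coloured along the greedy chain sweeping from left to right, each link reaching as
far right as possible: the chain alternates colours `0` and `1`, every other interval gets `2`.
An interval meets a run of at most three consecutive links; the middle one of three, and otherwise
the first, has a colour that is unique in its closed neighbourhood.
-/

open Finset

variable {ι : Type*}

section ClosedCF

/-- `r u v` reads "`u` lies in the closed neighbourhood of `v`". -/
def IsClosedCFColoring {α : Type*} (S : Finset ι) (r : ι → ι → Prop) (col : ι → α) : Prop :=
  ∀ v ∈ S, ∃ u ∈ S, r u v ∧ ∀ w ∈ S, r w v → w ≠ u → col w ≠ col u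

variable {r : ι → ι → Prop}

theorem IsClosedCFColoring.of_iff {α : Type*} {S : Finset ι} {r' : ι → ι → Prop} {col : ι → α}
    (hcol : IsClosedCFColoring S r col) (h : ∀ i ∈ S, ∀ j ∈ S, r i j ↔ r' i j) :
    IsClosedCFColoring S r' col := by
  intro v hv
  obtain ⟨u, hu, huv, huniq⟩ := hcol v hv
  exact ⟨u, hu, (h u hu v hv).1 huv, fun w hw hwv ↦ huniq w hw ((h w hw v hv).2 hwv)⟩

theorem IsClosedCFColoring.union_of_separated [DecidableEq ι] {α : Type*} {S T : Finset ι}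
    {colS colT : ι → α}
    (hS : IsClosedCFColoring S r colS) (hT : IsClosedCFColoring T r colT)
    (hsep : ∀ i ∈ S, ∀ j ∈ T, ¬ r i j ∧ ¬ r j i) :
    IsClosedCFColoring (S ∪ T) r (fun i ↦ if i ∈ S then colS i else colT i) := by
  intro v hv
  by_cases hvS : v ∈ S
  · obtain ⟨u, hu, huv, huniq⟩ := hS v hvS
    refine ⟨u, mem_union_left T hu, huv, fun w hw hwv hwu ↦ ?_⟩
    have hwS : w ∈ S := (mem_union.1 hw).resolve_right fun hwT ↦ (hsep v hvS w hwT).2 hwv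
    simpa only [if_pos hwS, if_pos hu] using huniq w hwS hwv hwu
  · have hvT : v ∈ T := (mem_union.1 hv).resolve_left hvS
    have hnS : ∀ w, r w v → w ∉ S := fun w hwv hwS ↦ (hsep w hwS v hvT).1 hwv
    obtain ⟨u, hu, huv, huniq⟩ := hT v hvT
    refine ⟨u, mem_union_right S hu, huv, fun w hw hwv hwu ↦ ?_⟩
    have hwT : w ∈ T := (mem_union.1 hw).resolve_left (hnS w hwv)
    simpa only [if_neg (hnS w hwv), if_neg (hnS u huv)] using huniq w hwT hwv hwu

theorem IsClosedCFColoring.union_add_of_lt [DecidableEq ι] {M N : Finset ι} {colM colN : ι → ℕ}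
    {K : ℕ}
    (hM : IsClosedCFColoring M r colM) (hN : IsClosedCFColoring N r colN)
    (hMN : Disjoint M N) (hlt : ∀ i ∈ N, colN i < K) :
    IsClosedCFColoring (M ∪ N) r (fun i ↦ if i ∈ M then K + colM i else colN i) := by
  intro v hv
  by_cases hvM : v ∈ M
  · obtain ⟨u, hu, huv, huniq⟩ := hM v hvM
    refine ⟨u, mem_union_left N hu, huv, fun w hw hwv hwu hcol ↦ ?_⟩
    simp only [if_pos hu] at hcol
    by_cases hwM : w ∈ M
    · simp only [if_pos hwM, Nat.add_left_cancel_iff] at hcol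
      exact huniq w hwM hwv hwu hcol
    · simp only [if_neg hwM] at hcol
      have := hlt w ((mem_union.1 hw).resolve_left hwM)
      omega
  · obtain ⟨u, hu, huv, huniq⟩ := hN v ((mem_union.1 hv).resolve_left hvM)
    have huM : u ∉ M := disjoint_right.1 hMN hu
    refine ⟨u, mem_union_right M hu, huv, fun w hw hwv hwu hcol ↦ ?_⟩
    simp only [if_neg huM] at hcol
    by_cases hwM : w ∈ M
    · simp only [if_pos hwM] at hcol
      have := hlt u hu
      omega
    · simp only [if_neg hwM] at hcol
      exact huniq w ((mem_union.1 hw).resolve_left hwM) hwv hwu hcol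

end ClosedCF

section Intervals

def IccOverlap (c d : ι → ℝ) (i j : ι) : Prop := c i ≤ d j ∧ c j ≤ d i

theorem iccOverlap_comm {c d : ι → ℝ} {i j : ι} : IccOverlap c d i j ↔ IccOverlap c d j i :=
  and_comm

theorem iccOverlap_iff_nonempty {c d : ι → ℝ} (hcd : ∀ i, c i ≤ d i) (i j : ι) :
    IccOverlap c d i j ↔ (Set.Icc (c i) (d i) ∩ Set.Icc (c j) (d j)).Nonempty := by
  simp only [IccOverlap, Set.Icc_inter_Icc, Set.nonempty_Icc, sup_le_iff, le_inf_iff]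
  have := hcd i
  have := hcd j
  tauto

section AltColor

variable [DecidableEq ι]

def altColor : List ι → Bool → ι → ℕ
  | [], _, _ => 2
  | σ :: l, b, i => if i = σ then b.toNat else altColor l (!b) i

theorem altColor_lt_three (l : List ι) (b : Bool) (i : ι) : altColor l b i < 3 := by
  induction l generalizing b with
  | nil => simp [altColor]
  | cons σ l ih =>
    unfold altColor
    split_ifs
    · exact (Bool.toNat_lt b).trans (by norm_num)
    · exact ih _

theorem altColor_of_notMem {l : List ι} {i : ι} (hi : i ∉ l) (b : Bool) : altColor l b i = 2 := by
  induction l generalizing b with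
  | nil => rfl
  | cons σ l ih =>
    rw [List.mem_cons, not_or] at hi
    simp only [altColor, if_neg hi.1, ih hi.2]

@[simp]
theorem altColor_cons_self (σ : ι) (l : List ι) (b : Bool) : altColor (σ :: l) b σ = b.toNat :=
  if_pos rfl

theorem altColor_cons_of_ne {σ i : ι} (l : List ι) (b : Bool) (hi : i ≠ σ) :
    altColor (σ :: l) b i = altColor l (!b) i :=
  if_neg hi

end AltColor

variable (S : Finset ι) (c d : ι → ℝ)

/-- The chain of the greedy sweep started at the frontier `y`. Its head is the interval crossing
`y` that reaches farthest right or, if none crosses `y`, the first one to end after `y`; only the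
properties of this choice that the argument uses are recorded. -/
def IsGreedyChain : ℝ → List ι → Prop
  | y, [] => ∀ i ∈ S, d i ≤ y
  | y, σ :: l => σ ∈ S ∧ y < d σ ∧ (∀ i ∈ S, c i ≤ y → y < d i → d i ≤ d σ) ∧
      (∀ i ∈ S, y < d i → c σ ≤ d i) ∧ IsGreedyChain (d σ) l

variable {S c d}

theorem exists_greedyChain_head (hcd : ∀ i ∈ S, c i ≤ d i) {y : ℝ}
    (hT : (S.filter (y < d ·)).Nonempty) :
    ∃ σ ∈ S, y < d σ ∧ (∀ i ∈ S, c i ≤ y → y < d i → d i ≤ d σ) ∧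
      (∀ i ∈ S, y < d i → c σ ≤ d i) := by
  by_cases hC : (S.filter fun i ↦ c i ≤ y ∧ y < d i).Nonempty
  · obtain ⟨σ, hσ, hmax⟩ := exists_max_image _ d hC
    obtain ⟨hσS, hcσ, hdσ⟩ := mem_filter.1 hσ
    exact ⟨σ, hσS, hdσ, fun i hi hci hdi ↦ hmax i (mem_filter.2 ⟨hi, hci, hdi⟩),
      fun i _ hdi ↦ (hcσ.trans_lt hdi).le⟩
  · obtain ⟨σ, hσ, hmin⟩ := exists_min_image _ d hT
    obtain ⟨hσS, hdσ⟩ := mem_filter.1 hσ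
    exact ⟨σ, hσS, hdσ, fun i hi hci hdi ↦ (hC ⟨i, mem_filter.2 ⟨hi, hci, hdi⟩⟩).elim,
      fun i hi hdi ↦ (hcd σ hσS).trans (hmin i (mem_filter.2 ⟨hi, hdi⟩))⟩

theorem exists_isGreedyChain (hcd : ∀ i ∈ S, c i ≤ d i) (y : ℝ) :
    ∃ l, IsGreedyChain S c d y l := by
  induction hN : #(S.filter (y < d ·)) using Nat.strong_induction_on generalizing y with
  | _ N ih =>
    rcases (S.filter (y < d ·)).eq_empty_or_nonempty with hT | hT
    · exact ⟨[], fun i hi ↦ not_lt.1 fun hyi ↦ (filter_eq_empty_iff.1 hT) hi hyi⟩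
    obtain ⟨σ, hσS, hyσ, hmax, hleft⟩ := exists_greedyChain_head hcd hT
    have hlt : #(S.filter (d σ < d ·)) < N := hN ▸ card_lt_card
      ⟨monotone_filter_right S fun _ _ h ↦ hyσ.trans h,
        fun h ↦ lt_irrefl (d σ) (mem_filter.1 (h (mem_filter.2 ⟨hσS, hyσ⟩))).2⟩
    obtain ⟨l, hl⟩ := ih _ hlt (d σ) rfl
    exact ⟨σ :: l, hσS, hyσ, hmax, hleft, hl⟩

theorem IsGreedyChain.mem_and_lt_of_mem {y : ℝ} {l : List ι} (h : IsGreedyChain S c d y l) {τ : ι}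
    (hτ : τ ∈ l) : τ ∈ S ∧ y < d τ := by
  induction l generalizing y with
  | nil => simp at hτ
  | cons σ l ih =>
    obtain ⟨hσS, hyσ, -, -, hl⟩ := h
    rcases List.mem_cons.1 hτ with rfl | hτ
    · exact ⟨hσS, hyσ⟩
    · exact (ih hl hτ).imp_right hyσ.trans

theorem IsGreedyChain.lt_left_of_mem {y : ℝ} {σ τ ρ : ι} {l : List ι}
    (h : IsGreedyChain S c d y (σ :: τ :: l)) (hρ : ρ ∈ l) : d σ < c ρ := by
  obtain ⟨-, -, -, -, -, hστ, hmax, -, hl⟩ := h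
  obtain ⟨hρS, hτρ⟩ := hl.mem_and_lt_of_mem hρ
  by_contra! hρσ
  exact hτρ.not_ge (hmax ρ hρS hρσ (hστ.trans hτρ))

variable [DecidableEq ι]

theorem IsGreedyChain.altColor_ne_head {y : ℝ} {σ : ι} {l : List ι}
    (h : IsGreedyChain S c d y (σ :: l)) (b : Bool) {v w : ι} (hv : d v ≤ d σ)
    (hwv : IccOverlap c d w v) (hwσ : w ≠ σ) : altColor (σ :: l) b w ≠ b.toNat := by
  rw [altColor_cons_of_ne l b hwσ]
  cases l with
  | nil => exact (Bool.toNat_lt b).ne'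
  | cons τ l =>
    by_cases hwτ : w = τ
    · subst hwτ
      cases b <;> simp
    rw [altColor_cons_of_ne l _ hwτ, Bool.not_not]
    have hwl : w ∉ l := fun hwl ↦ (h.lt_left_of_mem hwl).not_ge (hwv.1.trans hv)
    rw [altColor_of_notMem hwl]
    exact (Bool.toNat_lt b).ne'

theorem IsGreedyChain.exists_cf_witness (hcd : ∀ i ∈ S, c i ≤ d i) {y : ℝ} {l : List ι}
    (h : IsGreedyChain S c d y l) (b : Bool) {v : ι} (hv : v ∈ S) (hyv : y < c v) :
    ∃ u ∈ S, IccOverlap c d u v ∧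
      ∀ w ∈ S, IccOverlap c d w v → w ≠ u → altColor l b w ≠ altColor l b u := by
  induction l generalizing y b with
  | nil => exact absurd ((hyv.trans_le (hcd v hv)).trans_le (h v hv)) (lt_irrefl y)
  | cons σ l ih =>
    have ⟨hσS, _, _, hleft, hl⟩ := h
    rcases lt_or_ge (d σ) (c v) with hσv | hvσ
    · obtain ⟨u, hu, huv, huniq⟩ := ih hl (!b) hσv
      have hne : ∀ w, IccOverlap c d w v → w ≠ σ := fun w hwv hwσ ↦ hσv.not_ge (hwσ ▸ hwv.2)
      refine ⟨u, hu, huv, fun w hw hwv hwu ↦ ?_⟩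
      rw [altColor_cons_of_ne l b (hne w hwv), altColor_cons_of_ne l b (hne u huv)]
      exact huniq w hw hwv hwu
    have hσv : IccOverlap c d σ v := ⟨hleft v hv (hyv.trans_le (hcd v hv)), hvσ⟩
    rcases le_or_gt (d v) (d σ) with hdv | hdv
    · exact ⟨σ, hσS, hσv, fun w _ hwv hwσ ↦ by simpa using h.altColor_ne_head b hdv hwv hwσ⟩
    -- `v` crosses the right end of `σ`, so the next link is its witness.
    cases l with
    | nil => exact absurd (hl v hv) (not_le.2 hdv)
    | cons τ l =>
      have ⟨hτS, hστ, hmaxτ, hleftτ, _⟩ := hl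
      have hτσ : τ ≠ σ := fun e ↦ hστ.ne (congrArg d e).symm
      refine ⟨τ, hτS, ⟨hleftτ v hv hdv, hvσ.trans hστ.le⟩, fun w hw hwv hwτ ↦ ?_⟩
      rw [altColor_cons_of_ne _ b hτσ, altColor_cons_self]
      by_cases hwσ : w = σ
      · subst hwσ
        cases b <;> simp
      rw [altColor_cons_of_ne _ b hwσ]
      exact hl.altColor_ne_head (!b) (hmaxτ v hv hvσ hdv) hwv hwτ

theorem exists_closedCF_coloring_intervals (hcd : ∀ i ∈ S, c i ≤ d i) :
    ∃ col : ι → ℕ, (∀ i, col i < 3) ∧ IsClosedCFColoring S (IccOverlap c d) col := by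
  obtain ⟨y, hy⟩ := (S.finite_toSet.image c).bddBelow
  obtain ⟨l, hl⟩ := exists_isGreedyChain hcd (y - 1)
  refine ⟨altColor l false, altColor_lt_three l false,
    fun v hv ↦ hl.exists_cf_witness hcd false hv ?_⟩
  linarith [hy (Set.mem_image_of_mem c hv)]

end Intervals

theorem exists_card_filter_lt_le_half {α : Type*} [LinearOrder α] [Nonempty α] (S : Finset ι)
    (f : ι → α) : ∃ m, #(S.filter (f · < m)) ≤ #S / 2 ∧ #(S.filter (m < f ·)) ≤ #S / 2 := by
  rcases S.eq_empty_or_nonempty with rfl | hS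
  · exact ⟨Classical.arbitrary α, by simp⟩
  set A := S.filter fun i ↦ #(S.filter (f · < f i)) ≤ #S / 2
  have hA : A.Nonempty := by
    obtain ⟨i, hi, hmin⟩ := exists_min_image S f hS
    refine ⟨i, mem_filter.2 ⟨hi, ?_⟩⟩
    rw [filter_false_of_mem fun j hj ↦ not_lt.2 (hmin j hj), card_empty]
    exact Nat.zero_le _
  -- `m` is the largest value with at most half of `S` strictly below it.
  obtain ⟨i₁, hi₁, hmax⟩ := exists_max_image A f hA
  refine ⟨f i₁, (mem_filter.1 hi₁).2, ?_⟩
  by_contra! hbig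
  obtain ⟨i₂, hi₂, hmin⟩ := exists_min_image _ f (card_pos.1 (Nat.zero_lt_of_lt hbig))
  have hcompl := card_filter_add_card_filter_not (s := S) (f i₁ < f ·)
  have hsub : S.filter (f · < f i₂) ⊆ S.filter fun j ↦ ¬f i₁ < f j :=
    monotone_filter_right S fun j hj hj₂ ↦ fun h ↦ (hmin j (mem_filter.2 ⟨hj, h⟩)).not_gt hj₂
  have hi₂A : i₂ ∈ A := mem_filter.2 ⟨(mem_filter.1 hi₂).1, by have := card_le_card hsub; omega⟩
  exact (hmax i₂ hi₂A).not_gt (mem_filter.1 hi₂).2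

theorem exists_closedCF_coloring_rectangles [DecidableEq ι] {a b c d : ι → ℝ}
    (hab : ∀ i, a i ≤ b i) (hcd : ∀ i, c i ≤ d i) (k : ℕ) {S : Finset ι} (hS : #S < 2 ^ k) :
    ∃ col : ι → ℕ, (∀ i ∈ S, col i < 3 * k) ∧
      IsClosedCFColoring S (fun i j ↦ IccOverlap a b i j ∧ IccOverlap c d i j) col := by
  induction k generalizing S with
  | zero =>
    obtain rfl : S = ∅ := card_eq_zero.1 (by simpa using hS)
    exact ⟨0, by simp, by simp [IsClosedCFColoring]⟩
  | succ k ih =>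
    obtain ⟨m, hlt, hgt⟩ := exists_card_filter_lt_le_half S a
    have hhalf : #S / 2 < 2 ^ k := by rw [pow_succ] at hS; omega
    set L := S.filter (b · < m)
    set R := S.filter (m < a ·)
    set M := S.filter fun i ↦ ¬(b i < m ∨ m < a i)
    have hLS : L ⊆ S.filter (a · < m) := monotone_filter_right S fun i _ h ↦ (hab i).trans_lt h
    obtain ⟨colL, hLlt, hL⟩ := ih (((card_le_card hLS).trans hlt).trans_lt hhalf)
    obtain ⟨colR, hRlt, hR⟩ := ih (hgt.trans_lt hhalf)
    obtain ⟨colM, hMlt, hM⟩ := exists_closedCF_coloring_intervals (S := M) fun i _ ↦ hcd i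
    -- Every rectangle of `M` crosses the vertical line `x = m`.
    have hM' : IsClosedCFColoring M (fun i j ↦ IccOverlap a b i j ∧ IccOverlap c d i j) colM := by
      refine hM.of_iff fun i hi j hj ↦ (and_iff_right ?_).symm
      simp only [M, mem_filter, not_or, not_lt] at hi hj
      exact ⟨hi.2.2.trans hj.2.1, hj.2.2.trans hi.2.1⟩
    have hLR := hL.union_of_separated hR fun i hi j hj ↦ by
      have := (mem_filter.1 hi).2.trans (mem_filter.1 hj).2
      exact ⟨fun h ↦ h.1.2.not_gt this, fun h ↦ h.1.1.not_gt this⟩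
    have hS_eq : S = M ∪ (L ∪ R) := by
      rw [← filter_or, union_comm, filter_union_filter_not_eq]
    have hLRlt : ∀ i ∈ L ∪ R, (if i ∈ L then colL i else colR i) < 3 * k := fun i hi ↦ by
      split_ifs with hiL
      exacts [hLlt i hiL, hRlt i ((mem_union.1 hi).resolve_left hiL)]
    have hdisj : Disjoint M (L ∪ R) := by
      rw [← filter_or]
      exact (disjoint_filter_filter_not ..).symm
    rw [hS_eq]
    refine ⟨_, fun i hi ↦ ?_, hM'.union_add_of_lt hLR hdisj hLRlt⟩
    by_cases hiM : i ∈ M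
    · simp only [if_pos hiM]
      linarith [hMlt i]
    · simp only [if_neg hiM]
      linarith [hLRlt i ((mem_union.1 hi).resolve_left hiM)]

/-- The intersection graph `G` of any family of `n` axis-parallel closed rectangles in the
plane satisfies `χ_CF^cn(G) = O(log n)`: it admits a closed CF-coloring with at most
`3·⌈log₂ n⌉ + 3` colors. -/
theorem rectangles_closedCF_log (n : ℕ) (a b c d : Fin n → ℝ)
    (hab : ∀ i, a i ≤ b i) (hcd : ∀ i, c i ≤ d i)
    (G : SimpleGraph (Fin n))
    (hG : ∀ i j, G.Adj i j ↔ i ≠ j ∧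
      ((Set.Icc (a i) (b i) ×ˢ Set.Icc (c i) (d i)) ∩
        (Set.Icc (a j) (b j) ×ˢ Set.Icc (c j) (d j))).Nonempty) :
    ∃ col : Fin n → Fin (3 * Nat.clog 2 n + 3),
      ∀ v, ∃ u ∈ insert v (G.neighborSet v),
        ∀ w ∈ insert v (G.neighborSet v), w ≠ u → col w ≠ col u := by
  have hn : #(univ : Finset (Fin n)) < 2 ^ (Nat.clog 2 n + 1) := by
    rw [card_univ, Fintype.card_fin]
    exact (Nat.le_pow_clog one_lt_two n).trans_lt (Nat.pow_lt_pow_succ one_lt_two)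
  obtain ⟨col, hlt, hcol⟩ := exists_closedCF_coloring_rectangles hab hcd _ hn
  have hnbhd : ∀ v w, w ∈ insert v (G.neighborSet v) ↔
      IccOverlap a b w v ∧ IccOverlap c d w v := by
    intro v w
    rw [Set.mem_insert_iff, SimpleGraph.mem_neighborSet, hG, Set.prod_inter_prod,
      Set.prod_nonempty_iff, ← iccOverlap_iff_nonempty hab, ← iccOverlap_iff_nonempty hcd,
      iccOverlap_comm, @iccOverlap_comm _ c]
    constructor
    · rintro (rfl | ⟨-, h⟩)
      exacts [⟨⟨hab w, hab w⟩, hcd w, hcd w⟩, h]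
    · exact fun h ↦ (eq_or_ne w v).imp_right fun hwv ↦ ⟨hwv.symm, h⟩
  refine ⟨fun i ↦ ⟨col i, by have := hlt i (mem_univ i); omega⟩, fun v ↦ ?_⟩
  obtain ⟨u, -, huv, huniq⟩ := hcol v (mem_univ v)
  exact ⟨u, (hnbhd v u).2 huv, fun w hw hwu h ↦
    huniq w (mem_univ w) ((hnbhd v w).1 hw) hwu (congrArg Fin.val h)⟩
end

section
/- In the inductive interval-coloring procedure, any two selected intervals s_i and s_j with j ≥ i + 2 are disjoint. -/
/-- The union of a finite family of closed intervals (given by pairs of endpoints). -/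
def unionF (F : Finset (ℝ × ℝ)) : Set ℝ := ⋃ p ∈ F, Set.Icc p.1 p.2

/-- The set `S_{i+1}` of candidate intervals given the previously selected interval `si`:
intervals whose right endpoint exceeds `r(si)` and whose left endpoint either is `≤ r(si)`
or leaves behind no uncovered point of `⋃F`. -/
def Snext (F : Finset (ℝ × ℝ)) (si t : ℝ × ℝ) : Prop :=
  t ∈ F ∧ ((t.1 ≤ si.2 ∧ si.2 < t.2) ∨
    (si.2 < t.1 ∧ Set.Ico si.2 t.1 ∩ unionF F = ∅))

/-- In the inductive interval-selection procedure (`s 0` has leftmost left endpoint and,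
among such, maximal right endpoint; `s (i+1)` is a member of `S_{i+1}` with maximal right
endpoint), any two selected intervals `s i` and `s j` with `j ≥ i + 2` are disjoint. -/
theorem selected_intervals_disjoint (F : Finset (ℝ × ℝ)) (hF : ∀ p ∈ F, p.1 ≤ p.2)
    (m : ℕ) (s : ℕ → ℝ × ℝ)
    (hs0 : 0 < m → s 0 ∈ F)
    (h0left : 0 < m → ∀ t ∈ F, (s 0).1 ≤ t.1)
    (h0max : 0 < m → ∀ t ∈ F, t.1 = (s 0).1 → t.2 ≤ (s 0).2)
    (hmem : ∀ i, i + 1 < m → Snext F (s i) (s (i + 1)))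
    (hmax : ∀ i, i + 1 < m → ∀ t, Snext F (s i) t → t.2 ≤ (s (i + 1)).2) :
    ∀ i j, j < m → i + 2 ≤ j →
      Disjoint (Set.Icc (s i).1 (s i).2) (Set.Icc (s j).1 (s j).2) := by
  have hmono : ∀ k, k + 1 < m → (s k).2 < (s (k + 1)).2 := by
    intro k hk
    obtain ⟨hmemF, h | h⟩ := hmem k hk
    · exact h.2
    · have := hF _ hmemF
      linarith [h.1]
  have hle : ∀ d a, a + d < m → (s a).2 ≤ (s (a + d)).2 := by
    intro d
    induction d with
    | zero => intro a _; simp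
    | succ n ih =>
      intro a h
      have h1 := ih a (by omega)
      have h2 := hmono (a + n) (by omega)
      have : a + (n + 1) = a + n + 1 := by omega
      rw [this]; linarith
  intro i j hjm hij
  obtain ⟨k, rfl⟩ : ∃ k, j = k + 2 := ⟨j - 2, by omega⟩
  have h1 : (s i).2 ≤ (s k).2 := by
    have := hle (k - i) i (by omega)
    have e : i + (k - i) = k := by omega
    rwa [e] at this
  have h2 : (s k).2 < (s (k + 1)).2 := hmono k (by omega)
  have h3 : (s (k + 1)).2 < (s (k + 2)).2 := hmono (k + 1) (by omega)
  rw [Set.disjoint_left]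
  intro x hx1 hx2
  have hxle : (s (k + 2)).1 ≤ (s i).2 := le_trans hx2.1 hx1.2
  have hmemF : s (k + 2) ∈ F := (hmem (k + 1) (by omega)).1
  have hS : Snext F (s k) (s (k + 2)) :=
    ⟨hmemF, Or.inl ⟨le_trans hxle h1, by linarith⟩⟩
  have := hmax k (by omega) _ hS
  linarith
end

section
/- In the inductive interval-coloring procedure, any interval s ∈ F that intersects both s_i and s_{i+2} also intersects s_{i+1}. -/
/-- In the inductive interval-selection procedure, any interval `t ∈ F` intersecting both
`s i` and `s (i+2)` also intersects `s (i+1)`. -/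
theorem interval_meets_middle (F : Finset (ℝ × ℝ)) (hF : ∀ p ∈ F, p.1 ≤ p.2)
    (m : ℕ) (s : ℕ → ℝ × ℝ)
    (hs0 : 0 < m → s 0 ∈ F)
    (h0left : 0 < m → ∀ t ∈ F, (s 0).1 ≤ t.1)
    (h0max : 0 < m → ∀ t ∈ F, t.1 = (s 0).1 → t.2 ≤ (s 0).2)
    (hmem : ∀ i, i + 1 < m → Snext F (s i) (s (i + 1)))
    (hmax : ∀ i, i + 1 < m → ∀ t, Snext F (s i) t → t.2 ≤ (s (i + 1)).2) :
    ∀ i, i + 2 < m → ∀ t ∈ F,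
      (Set.Icc t.1 t.2 ∩ Set.Icc (s i).1 (s i).2).Nonempty →
      (Set.Icc t.1 t.2 ∩ Set.Icc (s (i + 2)).1 (s (i + 2)).2).Nonempty →
      (Set.Icc t.1 t.2 ∩ Set.Icc (s (i + 1)).1 (s (i + 1)).2).Nonempty := by
  intro i him t htF h1 h3
  have hi1 : i + 1 < m := by omega
  have hi2 : i + 1 + 1 < m := by omega
  have hS1 := hmem i hi1
  have hS2 := hmem (i + 1) hi2
  have hs1F : s (i + 1) ∈ F := hS1.1
  have hs2F : s (i + 2) ∈ F := hS2.1
  have ht12 : t.1 ≤ t.2 := hF t htF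
  have hs1le : (s (i + 1)).1 ≤ (s (i + 1)).2 := hF _ hs1F
  have hs2le : (s (i + 2)).1 ≤ (s (i + 2)).2 := hF _ hs2F
  obtain ⟨x, hx1, hx2⟩ := h1
  obtain ⟨y, hy1, hy2⟩ := h3
  have htl : t.1 ≤ (s i).2 := le_trans hx1.1 hx2.2
  have htr2 : (s (i + 2)).1 ≤ t.2 := le_trans hy2.1 hy1.2
  have h01 : (s i).2 < (s (i + 1)).2 := by
    rcases hS1.2 with ⟨_, h⟩ | ⟨h, _⟩
    · exact h
    · exact lt_of_lt_of_le h hs1le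
  have h12 : (s (i + 1)).2 < (s (i + 2)).2 := by
    rcases hS2.2 with ⟨_, h⟩ | ⟨h, _⟩
    · exact h
    · exact lt_of_lt_of_le h hs2le
  have key : (s (i + 1)).1 ≤ t.2 := by
    by_contra hcon
    push_neg at hcon
    -- t.2 < (s (i+1)).1
    have hcand : t.2 < (s i).2 → False := by
      intro hlt
      have hS : Snext F (s i) (s (i + 2)) :=
        ⟨hs2F, Or.inl ⟨le_trans htr2 (le_of_lt hlt), lt_trans h01 h12⟩⟩
      have := hmax i hi1 _ hS
      linarith
    rcases hS1.2 with ⟨ha, _⟩ | ⟨ha, hb⟩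
    · -- (s (i+1)).1 ≤ (s i).2
      exact hcand (lt_of_lt_of_le hcon ha)
    · -- (s i).2 < (s (i+1)).1, gap is empty
      rcases le_or_gt (s i).2 t.2 with hge | hlt
      · have hmemU : (s i).2 ∈ unionF F :=
          Set.mem_biUnion htF ⟨htl, hge⟩
        have : (s i).2 ∈ Set.Ico (s i).2 (s (i + 1)).1 ∩ unionF F :=
          ⟨⟨le_refl _, ha⟩, hmemU⟩
        rw [hb] at this
        exact this
      · exact hcand hlt
  refine ⟨max t.1 (s (i + 1)).1, ?_, ?_⟩
  · exact ⟨le_max_left _ _, max_le ht12 key⟩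
  · exact ⟨le_max_right _ _, max_le (le_trans htl (le_of_lt h01)) hs1le⟩
end

section
/- Let G be a graph, B a maximal independent set of G, and suppose the vertices of B are colored with colors from a set C₁ so that every vertex of V \ B has a uniquely-colored neighbor in B. Extend the coloring by giving all vertices of V \ B a single new color not in C₁. Then the resulting coloring is a closed CF-coloring of G with |C₁| + 1 colors. -/
/-- Let `B` be a maximal independent set of a graph `G`, and color the vertices of `B` from
a palette `C₁` so that every vertex of `V \ B` has a neighbor in `B` whose color is unique
among its neighbors in `B`. Extending by one new color (`none`) on all of `V \ B` yields a
closed CF-coloring of `G` (with `|C₁| + 1` colors). -/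
theorem maxIndep_extension_closedCF {V : Type*} (G : SimpleGraph V) (B : Set V)
    (hind : ∀ u ∈ B, ∀ v ∈ B, ¬G.Adj u v)
    (hmaxl : ∀ v ∉ B, ∃ b ∈ B, G.Adj v b)
    {C₁ : Type*} (c : V → C₁)
    (hcf : ∀ v ∉ B, ∃ b ∈ B, G.Adj v b ∧
      ∀ b' ∈ B, G.Adj v b' → b' ≠ b → c b' ≠ c b)
    (f : V → Option C₁)
    (hfB : ∀ v ∈ B, f v = some (c v))
    (hfnB : ∀ v ∉ B, f v = none) :
    ∀ v : V, ∃ u, (u = v ∨ G.Adj u v) ∧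
      ∀ w, (w = v ∨ G.Adj w v) → w ≠ u → f w ≠ f u := by
  intro v
  by_cases hv : v ∈ B
  · refine ⟨v, Or.inl rfl, ?_⟩
    intro w hw hne
    rcases hw with rfl | hadj
    · exact absurd rfl hne
    · have hwB : w ∉ B := fun hwB => hind w hwB v hv hadj
      rw [hfnB w hwB, hfB v hv]; simp
  · obtain ⟨b, hb, hadj, huniq⟩ := hcf v hv
    refine ⟨b, Or.inr hadj.symm, ?_⟩
    intro w hw hne
    by_cases hwB : w ∈ B
    · rw [hfB w hwB, hfB b hb]
      have hwv : w ≠ v := fun h => hv (h ▸ hwB)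
      have hadjw : G.Adj v w := (hw.resolve_left hwv).symm
      simpa using huniq w hwB hadjw hne
    · rw [hfnB w hwB, hfB b hb]; simp
end

section
/- Suppose for every finite family F of n discs, the hypergraph I(F) with vertex set F and hyperedges {D ∈ F : D ∩ b ≠ ∅} (over all discs b) has the property that every induced sub-hypergraph admits a proper coloring with at most 6 colors. Then for every assignment of lists L_D of size at least 1 + log_{6/5} n to the discs D ∈ F, there exists a choice of colors from the lists that is a conflict-free coloring of I(F). -/
/-!
Colour greedily, one list colour at a time, weighting a vertex whose list is `L` by
`(1 - 1/k) ^ #L`. Pick a colour `x` on some list, properly `k`-colour the remaining vertices,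
give `x` to the heaviest colour class `A` among the vertices whose list contains `x`, delete `A`
and erase `x` from all lists. A hyperedge whose remaining vertices all lie in `A` has only one
of them, since `A` is a colour class of a proper colouring; any other hyperedge inherits its
uniquely coloured vertex from the recursion, as that colour is not `x`. Since `A` carries at
least a `1/k` fraction of the weight of the vertices losing `x`, the total weight does not
increase. Lists of size `1 + log_{k/(k-1)} n` make it initially less than `1`, so no list ever
runs empty.
-/

open Finset Real

section Hypergraph

-- A hypergraph as an incidence relation: `H e v` means that `v` lies in the hyperedge `e`.
variable {V ι α : Type*} (H : ι → V → Prop)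

def IsProperColoringOn {κ : Type*} (W : Finset V) (col : V → κ) : Prop :=
  ∀ e, 2 ≤ {v | v ∈ W ∧ H e v}.ncard → ∃ i ∈ W, H e i ∧ ∃ j ∈ W, H e j ∧ col i ≠ col j

def IsConflictFreeOn (U : Finset V) (φ : V → α) : Prop :=
  ∀ e, (∃ i ∈ U, H e i) → ∃ i ∈ U, H e i ∧ ∀ j ∈ U, H e j → j ≠ i → φ j ≠ φ i

variable {H}

theorem IsProperColoringOn.eq_of_monochromatic {κ : Type*} {U : Finset V} {col : V → κ}
    (hcol : IsProperColoringOn H U col) {e : ι} {t : κ} (hmono : ∀ v ∈ U, H e v → col v = t)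
    {i j : V} (hi : i ∈ U) (hj : j ∈ U) (hei : H e i) (hej : H e j) : i = j := by
  by_contra hij
  have htwo : 2 ≤ {v | v ∈ U ∧ H e v}.ncard :=
    (Set.one_lt_ncard_iff).2 ⟨i, j, ⟨hi, hei⟩, ⟨hj, hej⟩, hij⟩
  obtain ⟨i', hi', hei', j', hj', hej', hne⟩ := hcol e htwo
  exact hne ((hmono i' hi' hei').trans (hmono j' hj' hej').symm)

variable [DecidableEq V]

theorem IsConflictFreeOn.piecewise {κ : Type*} {U A : Finset V} {φ : V → α} {col : V → κ}
    {t : κ} {x : α} (hφ : IsConflictFreeOn H (U \ A) φ) (hcol : IsProperColoringOn H U col)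
    (hA : ∀ v ∈ A, col v = t) (hx : ∀ v ∈ U \ A, φ v ≠ x) :
    IsConflictFreeOn H U (A.piecewise (fun _ => x) φ) := by
  rintro e ⟨i₀, hi₀, hei₀⟩
  by_cases hout : ∃ i ∈ U \ A, H e i
  · obtain ⟨i, hi, hei, huniq⟩ := hφ e hout
    have hiA : i ∉ A := (mem_sdiff.1 hi).2
    refine ⟨i, (mem_sdiff.1 hi).1, hei, fun j hj hej hji => ?_⟩
    rw [piecewise_eq_of_notMem _ _ _ hiA]
    by_cases hjA : j ∈ A
    · rw [piecewise_eq_of_mem _ _ _ hjA]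
      exact (hx i hi).symm
    · rw [piecewise_eq_of_notMem _ _ _ hjA]
      exact huniq j (mem_sdiff.2 ⟨hj, hjA⟩) hej hji
  · push Not at hout
    have hmono : ∀ v ∈ U, H e v → col v = t := fun v hv hev =>
      hA v (by_contra fun hvA => hout v (mem_sdiff.2 ⟨hv, hvA⟩) hev)
    exact ⟨i₀, hi₀, hei₀, fun j hj hej hji =>
      absurd (hcol.eq_of_monochromatic hmono hj hi₀ hej hei₀) hji⟩

end Hypergraph

section Potential

variable {V α : Type*} [DecidableEq V] [DecidableEq α]

theorem pow_card_erase_mul {q : ℝ} {s : Finset α} {x : α} (hx : x ∈ s) :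
    q ^ #(s.erase x) * q = q ^ #s := by
  rw [← pow_succ, card_erase_add_one hx]

theorem sum_sdiff_pow_card_erase_le {q : ℝ} (hq : 0 < q) {U A : Finset V} {L : V → Finset α}
    {x : α} (hA : A ⊆ {v ∈ U | x ∈ L v})
    (hheavy : ∑ v ∈ {v ∈ U | x ∈ L v} \ A, q ^ #(L v) ≤
      q * ∑ v ∈ {v ∈ U | x ∈ L v}, q ^ #(L v)) :
    ∑ v ∈ U \ A, q ^ #((L v).erase x) ≤ ∑ v ∈ U, q ^ #(L v) := by
  have hlose : {v ∈ U \ A | x ∈ L v} = {v ∈ U | x ∈ L v} \ A := by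
    ext v
    have := @hA v
    simp only [mem_filter, mem_sdiff] at this ⊢
    tauto
  have hkeep : {v ∈ U \ A | x ∉ L v} = {v ∈ U | x ∉ L v} := by
    ext v
    have := @hA v
    simp only [mem_filter, mem_sdiff] at this ⊢
    tauto
  calc ∑ v ∈ U \ A, q ^ #((L v).erase x)
      = ∑ v ∈ {v ∈ U | x ∈ L v} \ A, q ^ #(L v) / q + ∑ v ∈ U with x ∉ L v, q ^ #(L v) := by
        rw [← sum_filter_add_sum_filter_not (U \ A) (x ∈ L ·), hlose, hkeep]
        congr 1
        · refine sum_congr rfl fun v hv => ?_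
          have hxv : x ∈ L v := (mem_filter.1 (mem_sdiff.1 hv).1).2
          rw [← pow_card_erase_mul hxv, mul_div_cancel_right₀ _ hq.ne']
        · exact sum_congr rfl fun v hv => by rw [erase_eq_of_notMem (mem_filter.1 hv).2]
    _ ≤ ∑ v ∈ U with x ∈ L v, q ^ #(L v) + ∑ v ∈ U with x ∉ L v, q ^ #(L v) := by
        gcongr
        rw [← sum_div, div_le_iff₀ hq, mul_comm]
        exact hheavy
    _ = ∑ v ∈ U, q ^ #(L v) := sum_filter_add_sum_filter_not U _ _

end Potential

theorem pow_le_div_of_one_add_logb_le {q n : ℝ} (hq : 0 < q) (hq1 : q < 1) (hn : 0 < n) {m : ℕ}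
    (hm : 1 + logb q⁻¹ n ≤ m) : q ^ m ≤ q / n := by
  calc q ^ m = q ^ (m : ℝ) := (rpow_natCast q m).symm
    _ ≤ q ^ (1 + logb q⁻¹ n) := rpow_le_rpow_of_exponent_ge hq hq1.le hm
    _ = q / n := by
      rw [rpow_add hq, rpow_one, logb_inv_base, rpow_neg hq.le,
        rpow_logb hq hq1.ne hn, div_eq_mul_inv]

theorem one_sub_one_div_pos {k : ℕ} (hk : 1 < k) : 0 < 1 - 1 / (k : ℝ) := by
  have : (1 : ℝ) < k := by exact_mod_cast hk
  rw [sub_pos, div_lt_one (by linarith)]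
  exact this

theorem nonempty_of_sum_pow_card_lt_one {V α : Type*} {q : ℝ} (hq : 0 ≤ q) {U : Finset V}
    {L : V → Finset α} (hL : ∑ v ∈ U, q ^ #(L v) < 1) {u : V} (hu : u ∈ U) : (L u).Nonempty := by
  rw [nonempty_iff_ne_empty]
  rintro hLu
  have := single_le_sum (fun v _ => pow_nonneg hq #(L v)) hu
  rw [hLu, card_empty, pow_zero] at this
  linarith

theorem exists_colorClass_nonempty_sum_sdiff_le {V : Type*} [DecidableEq V] {k : ℕ} (hk : 0 < k)
    (col : V → Fin k) {w : V → ℝ} (hw : ∀ v, 0 < w v) {S : Finset V} (hS : S.Nonempty) :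
    ∃ t, {v ∈ S | col v = t}.Nonempty ∧
      ∑ v ∈ S \ {v ∈ S | col v = t}, w v ≤ (1 - 1 / k) * ∑ v ∈ S, w v := by
  have hk0 : (k : ℝ) ≠ 0 := by positivity
  have : Nonempty (Fin k) := ⟨⟨0, hk⟩⟩
  obtain ⟨t, -, ht⟩ := exists_le_sum_fiber_of_maps_to_of_nsmul_le_sum (t := univ) (f := col)
    (w := w) (b := (∑ v ∈ S, w v) / k) (fun _ _ => mem_univ _) univ_nonempty
    (by rw [card_univ, Fintype.card_fin, nsmul_eq_mul, mul_div_cancel₀ _ hk0])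
  have hpos : 0 < ∑ v ∈ S, w v := sum_pos (fun v _ => hw v) hS
  refine ⟨t, ?_, ?_⟩
  · rw [nonempty_iff_ne_empty]
    rintro hA
    rw [hA, sum_empty] at ht
    have : 0 < (∑ v ∈ S, w v) / k := by positivity
    linarith
  · rw [sum_sdiff_eq_sub (filter_subset _ _)]
    have : (1 - 1 / k) * ∑ v ∈ S, w v = ∑ v ∈ S, w v - (∑ v ∈ S, w v) / k := by ring
    linarith

section ListColoring

variable {V ι α : Type*} [DecidableEq V] [DecidableEq α] [Nonempty α] {H : ι → V → Prop} {k : ℕ}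

theorem exists_isConflictFreeOn_of_sum_pow_lt_one (hk : 1 < k) (U : Finset V)
    (hP : ∀ W ⊆ U, ∃ col : V → Fin k, IsProperColoringOn H W col) (L : V → Finset α)
    (hL : ∑ v ∈ U, (1 - 1 / k : ℝ) ^ #(L v) < 1) :
    ∃ φ : V → α, (∀ v ∈ U, φ v ∈ L v) ∧ IsConflictFreeOn H U φ := by
  induction U using Finset.strongInduction generalizing L with
  | H U ih =>
  rcases U.eq_empty_or_nonempty with rfl | ⟨u, hu⟩
  · exact ⟨fun _ => Classical.arbitrary α, by simp, by simp [IsConflictFreeOn]⟩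
  have hq : 0 < (1 - 1 / k : ℝ) := one_sub_one_div_pos hk
  obtain ⟨x, hx⟩ := nonempty_of_sum_pow_card_lt_one hq.le hL hu
  obtain ⟨col, hcol⟩ := hP U subset_rfl
  set S := {v ∈ U | x ∈ L v}
  obtain ⟨t, hAne, hheavy⟩ := exists_colorClass_nonempty_sum_sdiff_le (by omega) col
    (fun v => pow_pos hq #(L v)) (S := S) ⟨u, mem_filter.2 ⟨hu, hx⟩⟩
  set A := {v ∈ S | col v = t}
  have hAS : A ⊆ S := filter_subset _ _
  have hAU : A ⊆ U := hAS.trans (filter_subset _ _)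
  obtain ⟨φ, hφL, hφ⟩ := ih (U \ A) (sdiff_ssubset hAU hAne)
    (fun W hW => hP W (hW.trans sdiff_subset)) (fun v => (L v).erase x)
    ((sum_sdiff_pow_card_erase_le hq hAS hheavy).trans_lt hL)
  refine ⟨A.piecewise (fun _ => x) φ, fun v hv => ?_,
    hφ.piecewise hcol (fun v hv => (mem_filter.1 hv).2) fun v hv => ne_of_mem_erase (hφL v hv)⟩
  by_cases hvA : v ∈ A
  · rw [piecewise_eq_of_mem _ _ _ hvA]
    exact (mem_filter.1 (hAS hvA)).2
  · rw [piecewise_eq_of_notMem _ _ _ hvA]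
    exact mem_of_mem_erase (hφL v (mem_sdiff.2 ⟨hv, hvA⟩))

theorem exists_isConflictFreeOn_of_one_add_logb_le_card (hk : 1 < k) (U : Finset V)
    (hP : ∀ W ⊆ U, ∃ col : V → Fin k, IsProperColoringOn H W col) (L : V → Finset α)
    (hL : ∀ v ∈ U, 1 + logb (1 + 1 / ((k : ℝ) - 1)) #U ≤ #(L v)) :
    ∃ φ : V → α, (∀ v ∈ U, φ v ∈ L v) ∧ IsConflictFreeOn H U φ := by
  refine exists_isConflictFreeOn_of_sum_pow_lt_one hk U hP L ?_
  rcases U.eq_empty_or_nonempty with rfl | hU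
  · simp
  have hk' : (1 : ℝ) < k := by exact_mod_cast hk
  have hq : 0 < 1 - 1 / (k : ℝ) := one_sub_one_div_pos hk
  have hq1 : 1 - 1 / (k : ℝ) < 1 := sub_lt_self 1 (by positivity)
  have hbase : 1 + 1 / ((k : ℝ) - 1) = (1 - 1 / (k : ℝ))⁻¹ := by
    have : (k : ℝ) - 1 ≠ 0 := by linarith
    field_simp
    ring
  have hU0 : (0 : ℝ) < #U := by exact_mod_cast hU.card_pos
  calc ∑ v ∈ U, (1 - 1 / k : ℝ) ^ #(L v)
      ≤ ∑ _v ∈ U, (1 - 1 / k : ℝ) / #U :=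
        sum_le_sum fun v hv => pow_le_div_of_one_add_logb_le hq hq1 hU0 (hbase ▸ hL v hv)
    _ = 1 - 1 / k := by rw [sum_const, nsmul_eq_mul, mul_div_cancel₀ _ hU0.ne']
    _ < 1 := hq1

end ListColoring

/-- Suppose that for every finite family of discs, every induced sub-hypergraph of the
hypergraph `I(F)` (vertices: the discs; hyperedges: the sets of discs meeting a disc `b`,
over all discs `b`) admits a proper (non-monochromatic) coloring with at most 6 colors.
Then for every family of `n ≥ 1` discs with lists of size at least `1 + log_{6/5} n`
attached to the discs, one can choose a color from each list so that the resulting coloring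
is conflict-free for `I(F)`. -/
theorem discs_listCF
    (hyp : ∀ (n : ℕ) (c : Fin n → Plane) (r : Fin n → ℝ) (W : Finset (Fin n)),
      ∃ col : Fin n → Fin 6, ∀ (b : Plane) (s : ℝ),
        2 ≤ ({i : Fin n | i ∈ W ∧
            (Metric.closedBall (c i) (r i) ∩ Metric.closedBall b s).Nonempty}).ncard →
        ∃ i ∈ W, (Metric.closedBall (c i) (r i) ∩ Metric.closedBall b s).Nonempty ∧
          ∃ j ∈ W, (Metric.closedBall (c j) (r j) ∩ Metric.closedBall b s).Nonempty ∧
            col i ≠ col j) :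
    ∀ (n : ℕ), 1 ≤ n → ∀ (c : Fin n → Plane) (r : Fin n → ℝ) (L : Fin n → Finset ℕ),
      (∀ i, 1 + Real.logb (6 / 5) n ≤ ((L i).card : ℝ)) →
      ∃ φ : Fin n → ℕ, (∀ i, φ i ∈ L i) ∧
        ∀ (b : Plane) (s : ℝ),
          {i : Fin n |
            (Metric.closedBall (c i) (r i) ∩ Metric.closedBall b s).Nonempty}.Nonempty →
          ∃ i, (Metric.closedBall (c i) (r i) ∩ Metric.closedBall b s).Nonempty ∧
            ∀ j, (Metric.closedBall (c j) (r j) ∩ Metric.closedBall b s).Nonempty →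
              j ≠ i → φ j ≠ φ i := by
  intro n _ c r L hL
  let H : Plane × ℝ → Fin n → Prop := fun e i =>
    (Metric.closedBall (c i) (r i) ∩ Metric.closedBall e.1 e.2).Nonempty
  have hP : ∀ W ⊆ univ, ∃ col : Fin n → Fin 6, IsProperColoringOn H W col := fun W _ =>
    (hyp n c r W).imp fun _ hcol e => hcol e.1 e.2
  have hbase : (6 / 5 : ℝ) = 1 + 1 / (((6 : ℕ) : ℝ) - 1) := by norm_num
  obtain ⟨φ, hφL, hφ⟩ := exists_isConflictFreeOn_of_one_add_logb_le_card (by norm_num) univ hP L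
    fun i _ => by rw [← hbase, card_univ, Fintype.card_fin]; exact hL i
  refine ⟨φ, fun i => hφL i (mem_univ i), fun b s ⟨i₀, hi₀⟩ => ?_⟩
  obtain ⟨i, -, hi, huniq⟩ := hφ (b, s) ⟨i₀, mem_univ i₀, hi₀⟩
  exact ⟨i, hi, fun j hj => huniq j (mem_univ j) hj⟩
end
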